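/- arXiv:2112.05426 — 6 statements merged into one kernel-verified Lean document; each statement's English description precedes it below -/
import Mathlib

section
/- Fix δ with 1/2 < δ < 1 and let c_δ := max( 1 + δ + (1+5δ)(1−δ)²/δ², 1/δ² + 1/2 ). Then for every finite set P ⊂ ℝ with 0 ∈ P, the source-based range assignment ρ_sb(P) is a feasible broadcast range assignment for P with source 0, and cost_2(ρ_sb(P)) ≤ c_δ · opt_2(P). -/
open Finset

attribute [local instance] Classical.propDecidable

/-- A range assignment `ρ` for a finite point set `P` with source `s` is *feasible* if it is
nonnegative on `P` and every point of `P` is reachable from `s` via a sequence of points of `P`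
in which each step is within the range of its starting point. -/
def Feasible {X : Type*} [MetricSpace X] (P : Finset X) (s : X) (ρ : X → ℝ) : Prop :=
  (∀ p ∈ P, 0 ≤ ρ p) ∧
  ∀ p ∈ P, ∃ (m : ℕ) (f : ℕ → X), f 0 = s ∧ f m = p ∧ (∀ i ≤ m, f i ∈ P) ∧
    ∀ i < m, dist (f i) (f (i + 1)) ≤ ρ (f i)

/-- The cost `∑_{p ∈ P} ρ(p)^α` of a range assignment. -/
noncomputable def cost {X : Type*} (α : ℝ) (P : Finset X) (ρ : X → ℝ) : ℝ :=
  ∑ p ∈ P, ρ p ^ α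

/-- The optimal broadcast cost: the infimum of `cost α P ρ` over feasible `ρ`. -/
noncomputable def opt {X : Type*} [MetricSpace X] (α : ℝ) (P : Finset X) (s : X) : ℝ :=
  sInf {c : ℝ | ∃ ρ : X → ℝ, Feasible P s ρ ∧ cost α P ρ = c}

/-- `p` has a successor in `P`: a point of `P` strictly beyond `p` on the same side of the
source 0. -/
def HasSuc (P : Finset ℝ) (p : ℝ) : Prop :=
  (0 < p ∧ ∃ q ∈ P, p < q) ∨ (p < 0 ∧ ∃ q ∈ P, q < p)

/-- The successor of `p` in `P`: the nearest point of `P` strictly to the right of `p` if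
`p > 0`, and the nearest point strictly to the left of `p` if `p < 0`. -/
noncomputable def suc (P : Finset ℝ) (p : ℝ) : ℝ :=
  if 0 < p then sInf {q | q ∈ P ∧ p < q} else sSup {q | q ∈ P ∧ q < p}

/-- The standard range of `p`: the distance to its successor, or 0 if there is none. -/
noncomputable def standardRange (P : Finset ℝ) (p : ℝ) : ℝ :=
  if HasSuc P p then |suc P p - p| else 0

/-- A non-source point is *expensive* if its successor exists and
`|suc(p) - p| > δ·|suc(p)|`. -/
def Expensive (δ : ℝ) (P : Finset ℝ) (p : ℝ) : Prop :=
  HasSuc P p ∧ δ * |suc P p| < |suc P p - p|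

/-- `d_max`: the maximum of `|suc(p)|` over expensive non-source points together with the
distances from the source 0 to its nearest neighbour on each side (0 if `P = {0}`). -/
noncomputable def dmax (δ : ℝ) (P : Finset ℝ) : ℝ :=
  sSup ({x | ∃ p ∈ P, p ≠ (0:ℝ) ∧ Expensive δ P p ∧ x = |suc P p|} ∪
        {x | (∃ q ∈ P, (0:ℝ) < q) ∧ x = sInf {q | q ∈ P ∧ (0:ℝ) < q}} ∪
        {x | (∃ q ∈ P, q < (0:ℝ)) ∧ x = -sSup {q | q ∈ P ∧ q < (0:ℝ)}})

/-- The source-based range assignment `ρ_sb`: the source gets `d_max`, expensive non-source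
points get 0, and cheap points get their standard range. -/
noncomputable def rsb (δ : ℝ) (P : Finset ℝ) : ℝ → ℝ := fun p =>
  if p = 0 then dmax δ P
  else if Expensive δ P p then 0
  else standardRange P p

set_option maxHeartbeats 1000000

lemma sInf_gt_spec (P : Finset ℝ) (p : ℝ) (h : ∃ q ∈ P, p < q) :
    sInf {q | q ∈ P ∧ p < q} ∈ P ∧ p < sInf {q | q ∈ P ∧ p < q} ∧
      ∀ q ∈ P, p < q → sInf {q | q ∈ P ∧ p < q} ≤ q := by
  classical
  have hset : {q | q ∈ P ∧ p < q} = ↑(P.filter (fun q => p < q)) := by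
    ext x; simp [Finset.mem_filter]
  obtain ⟨q, hq, hpq⟩ := h
  have hne : (P.filter (fun q => p < q)).Nonempty := ⟨q, by simp [Finset.mem_filter, hq, hpq]⟩
  rw [hset, hne.csInf_eq_min']
  have hmem := (P.filter (fun q => p < q)).min'_mem hne
  simp only [Finset.mem_filter] at hmem
  exact ⟨hmem.1, hmem.2, fun r hr hpr => Finset.min'_le _ r (by simp [Finset.mem_filter, hr, hpr])⟩

lemma sSup_lt_spec (P : Finset ℝ) (p : ℝ) (h : ∃ q ∈ P, q < p) :
    sSup {q | q ∈ P ∧ q < p} ∈ P ∧ sSup {q | q ∈ P ∧ q < p} < p ∧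
      ∀ q ∈ P, q < p → q ≤ sSup {q | q ∈ P ∧ q < p} := by
  classical
  have hset : {q | q ∈ P ∧ q < p} = ↑(P.filter (fun q => q < p)) := by
    ext x; simp [Finset.mem_filter]
  obtain ⟨q, hq, hpq⟩ := h
  have hne : (P.filter (fun q => q < p)).Nonempty := ⟨q, by simp [Finset.mem_filter, hq, hpq]⟩
  rw [hset, hne.csSup_eq_max']
  have hmem := (P.filter (fun q => q < p)).max'_mem hne
  simp only [Finset.mem_filter] at hmem
  exact ⟨hmem.1, hmem.2, fun r hr hpr => Finset.le_max' _ r (by simp [Finset.mem_filter, hr, hpr])⟩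

-- suc spec for positive points

lemma suc_spec_pos {P : Finset ℝ} {p : ℝ} (hp : 0 < p) (h : ∃ q ∈ P, p < q) :
    suc P p ∈ P ∧ p < suc P p ∧ ∀ q ∈ P, p < q → suc P p ≤ q := by
  rw [suc, if_pos hp]; exact sInf_gt_spec P p h

lemma suc_spec_neg {P : Finset ℝ} {p : ℝ} (hp : p < 0) (h : ∃ q ∈ P, q < p) :
    suc P p ∈ P ∧ suc P p < p ∧ ∀ q ∈ P, q < p → q ≤ suc P p := by
  rw [suc, if_neg (by linarith)]; exact sSup_lt_spec P p h

noncomputable def Dcand (δ : ℝ) (P : Finset ℝ) : Finset ℝ :=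
  ((P.filter (fun p => p ≠ 0 ∧ Expensive δ P p)).image (fun p => |suc P p|)) ∪
  ((P.filter (fun q => 0 < q)).image (fun _ => sInf {q | q ∈ P ∧ (0:ℝ) < q})) ∪
  ((P.filter (fun q => q < 0)).image (fun _ => -sSup {q | q ∈ P ∧ q < (0:ℝ)}))

lemma dcand_set (δ : ℝ) (P : Finset ℝ) :
    ({x | ∃ p ∈ P, p ≠ (0:ℝ) ∧ Expensive δ P p ∧ x = |suc P p|} ∪
     {x | (∃ q ∈ P, (0:ℝ) < q) ∧ x = sInf {q | q ∈ P ∧ (0:ℝ) < q}} ∪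
     {x | (∃ q ∈ P, q < (0:ℝ)) ∧ x = -sSup {q | q ∈ P ∧ q < (0:ℝ)}}) = ↑(Dcand δ P) := by
  ext x
  simp only [Dcand, Finset.coe_union, Set.mem_union, Finset.coe_image, Set.mem_image,
    Finset.mem_coe, Finset.mem_filter, Set.mem_setOf_eq]
  constructor
  · rintro ((⟨p, hp, h0, he, hx⟩ | ⟨⟨q, hq, h0⟩, hx⟩) | ⟨⟨q, hq, h0⟩, hx⟩)
    · exact Or.inl (Or.inl ⟨p, ⟨hp, h0, he⟩, hx.symm⟩)
    · exact Or.inl (Or.inr ⟨q, ⟨hq, h0⟩, hx.symm⟩)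
    · exact Or.inr ⟨q, ⟨hq, h0⟩, hx.symm⟩
  · rintro ((⟨p, ⟨hp, h0, he⟩, hx⟩ | ⟨q, ⟨hq, h0⟩, hx⟩) | ⟨q, ⟨hq, h0⟩, hx⟩)
    · exact Or.inl (Or.inl ⟨p, hp, h0, he, hx.symm⟩)
    · exact Or.inl (Or.inr ⟨⟨q, hq, h0⟩, hx.symm⟩)
    · exact Or.inr ⟨⟨q, hq, h0⟩, hx.symm⟩

lemma dmax_eq_sSup (δ : ℝ) (P : Finset ℝ) : dmax δ P = sSup ↑(Dcand δ P) := by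
  rw [dmax, dcand_set]

lemma le_dmax {δ : ℝ} {P : Finset ℝ} {x : ℝ} (hx : x ∈ Dcand δ P) : x ≤ dmax δ P := by
  rw [dmax_eq_sSup]
  have hne : (Dcand δ P).Nonempty := ⟨x, hx⟩
  rw [hne.csSup_eq_max']
  exact Finset.le_max' _ x hx

lemma dmax_mem {δ : ℝ} {P : Finset ℝ} (h : (Dcand δ P).Nonempty) : dmax δ P ∈ Dcand δ P := by
  rw [dmax_eq_sSup, h.csSup_eq_max']
  exact Finset.max'_mem _ h

lemma dmax_empty {δ : ℝ} {P : Finset ℝ} (h : ¬(Dcand δ P).Nonempty) : dmax δ P = 0 := by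
  rw [dmax_eq_sSup, Finset.not_nonempty_iff_eq_empty.1 h]
  simp [Real.sSup_empty]

def Reach (P : Finset ℝ) (ρ : ℝ → ℝ) (p : ℝ) : Prop :=
  ∃ (m : ℕ) (f : ℕ → ℝ), f 0 = 0 ∧ f m = p ∧ (∀ i ≤ m, f i ∈ P) ∧
    ∀ i < m, dist (f i) (f (i + 1)) ≤ ρ (f i)

lemma reach_zero {P : Finset ℝ} {ρ : ℝ → ℝ} (hP : (0:ℝ) ∈ P) : Reach P ρ 0 :=
  ⟨0, fun _ => 0, rfl, rfl, fun _ _ => hP, fun i hi => absurd hi (Nat.not_lt_zero i)⟩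

lemma reach_step {P : Finset ℝ} {ρ : ℝ → ℝ} {p q : ℝ} (h : Reach P ρ p) (hq : q ∈ P)
    (hd : dist p q ≤ ρ p) : Reach P ρ q := by
  obtain ⟨m, f, h0, hm, hmem, hstep⟩ := h
  refine ⟨m + 1, fun i => if i ≤ m then f i else q, by simp [h0], by simp, ?_, ?_⟩
  · intro i hi
    by_cases him : i ≤ m
    · simp [him, hmem i him]
    · simp [him, hq]
  · intro i hi
    rcases Nat.lt_or_ge i m with him | him
    · have h1 : i ≤ m := him.le
      have h2 : i + 1 ≤ m := him
      simp only [h1, h2, if_true]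
      exact hstep i him
    · have : i = m := by omega
      subst this
      simp [hm, hd]

lemma mem_dcand_exp {δ : ℝ} {P : Finset ℝ} {p : ℝ} (hp : p ∈ P) (h0 : p ≠ 0)
    (he : Expensive δ P p) : |suc P p| ∈ Dcand δ P := by
  classical
  apply Finset.mem_union_left
  apply Finset.mem_union_left
  exact Finset.mem_image.2 ⟨p, Finset.mem_filter.2 ⟨hp, h0, he⟩, rfl⟩

lemma mem_dcand_pos {δ : ℝ} {P : Finset ℝ} {q : ℝ} (hq : q ∈ P) (h0 : 0 < q) :
    sInf {q | q ∈ P ∧ (0:ℝ) < q} ∈ Dcand δ P := by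
  classical
  apply Finset.mem_union_left
  apply Finset.mem_union_right
  exact Finset.mem_image.2 ⟨q, Finset.mem_filter.2 ⟨hq, h0⟩, rfl⟩

lemma mem_dcand_neg {δ : ℝ} {P : Finset ℝ} {q : ℝ} (hq : q ∈ P) (h0 : q < 0) :
    -sSup {q | q ∈ P ∧ q < (0:ℝ)} ∈ Dcand δ P := by
  classical
  apply Finset.mem_union_right
  exact Finset.mem_image.2 ⟨q, Finset.mem_filter.2 ⟨hq, h0⟩, rfl⟩

lemma dcand_nonneg {δ : ℝ} {P : Finset ℝ} {x : ℝ} (hx : x ∈ Dcand δ P) : 0 ≤ x := by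
  classical
  simp only [Dcand, Finset.mem_union, Finset.mem_image, Finset.mem_filter] at hx
  rcases hx with ((⟨p, ⟨_, _, _⟩, hx⟩ | ⟨q, ⟨hq, h0⟩, hx⟩) | ⟨q, ⟨hq, h0⟩, hx⟩)
  · rw [← hx]; exact abs_nonneg _
  · rw [← hx]; exact (sInf_gt_spec P 0 ⟨q, hq, h0⟩).2.1.le
  · rw [← hx]
    have := (sSup_lt_spec P 0 ⟨q, hq, h0⟩).2.1
    linarith

lemma dmax_nonneg (δ : ℝ) (P : Finset ℝ) : 0 ≤ dmax δ P := by
  by_cases h : (Dcand δ P).Nonempty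
  · exact dcand_nonneg (dmax_mem h)
  · rw [dmax_empty h]

lemma rsb_zero (δ : ℝ) (P : Finset ℝ) : rsb δ P 0 = dmax δ P := by simp [rsb]

lemma reach_base {δ : ℝ} {P : Finset ℝ} (hP : (0:ℝ) ∈ P) {p : ℝ} (hp : p ∈ P)
    (hcard : (P.filter (fun q => (0 < q ∧ q < p) ∨ (p < q ∧ q < 0))).card = 0) :
    Reach P (rsb δ P) p := by
  rcases lt_trichotomy p 0 with hneg | hzero | hpos
  · have hspec := sSup_lt_spec P 0 ⟨p, hp, hneg⟩
    set I := sSup {q | q ∈ P ∧ q < (0:ℝ)} with hI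
    have hIp : p ≤ I := hspec.2.2 p hp hneg
    have hIeq : I = p := by
      rcases eq_or_lt_of_le hIp with h | h
      · exact h.symm
      · exfalso
        have : I ∈ P.filter (fun q => (0 < q ∧ q < p) ∨ (p < q ∧ q < 0)) :=
          Finset.mem_filter.2 ⟨hspec.1, Or.inr ⟨h, hspec.2.1⟩⟩
        have := Finset.card_pos.2 ⟨I, this⟩
        omega
    have hle : -p ≤ dmax δ P := by
      have := le_dmax (mem_dcand_neg (δ := δ) hp hneg)
      rw [← hI, hIeq] at this
      exact this
    apply reach_step (reach_zero hP) hp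
    rw [Real.dist_eq, rsb_zero, abs_of_nonneg (by linarith : (0:ℝ) ≤ 0 - p)]
    linarith
  · subst hzero; exact reach_zero hP
  · have hspec := sInf_gt_spec P 0 ⟨p, hp, hpos⟩
    set I := sInf {q | q ∈ P ∧ (0:ℝ) < q} with hI
    have hIp : I ≤ p := hspec.2.2 p hp hpos
    have hIeq : I = p := by
      rcases eq_or_lt_of_le hIp with h | h
      · exact h
      · exfalso
        have : I ∈ P.filter (fun q => (0 < q ∧ q < p) ∨ (p < q ∧ q < 0)) :=
          Finset.mem_filter.2 ⟨hspec.1, Or.inl ⟨hspec.2.1, h⟩⟩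
        have := Finset.card_pos.2 ⟨I, this⟩
        omega
    have hle : p ≤ dmax δ P := by
      have := le_dmax (mem_dcand_pos (δ := δ) hp hpos)
      rw [← hI, hIeq] at this
      exact this
    apply reach_step (reach_zero hP) hp
    rw [Real.dist_eq, rsb_zero, abs_of_nonpos (by linarith : 0 - p ≤ (0:ℝ))]
    linarith

theorem rsb_feasible (δ : ℝ) (P : Finset ℝ) (hP : (0:ℝ) ∈ P) : Feasible P 0 (rsb δ P) := by
  constructor
  · intro p _
    by_cases h0 : p = 0
    · simp [rsb, h0, dmax_nonneg]
    · by_cases he : Expensive δ P p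
      · simp [rsb, h0, he]
      · simp only [rsb, if_neg h0, if_neg he, standardRange]
        by_cases hs : HasSuc P p
        · simp [hs, abs_nonneg]
        · simp [hs]
  · intro p hp
    suffices h : Reach P (rsb δ P) p by exact h
    -- strong induction on the number of points strictly between 0 and p
    have key : ∀ n : ℕ, ∀ p ∈ P,
        (P.filter (fun q => (0 < q ∧ q < p) ∨ (p < q ∧ q < 0))).card ≤ n →
        Reach P (rsb δ P) p := by
      intro n
      induction n with
      | zero =>
        intro p hp hcard
        exact reach_base hP hp (by omega)
      | succ n ih =>
        intro p hp hcard
        by_cases hempty : (P.filter (fun q => (0 < q ∧ q < p) ∨ (p < q ∧ q < 0))).card = 0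
        · exact reach_base hP hp hempty
        · rcases lt_trichotomy p 0 with hneg | hzero | hpos
          · -- p < 0 ; predecessor p' = min of between-points
            set B := P.filter (fun q => (0 < q ∧ q < p) ∨ (p < q ∧ q < 0)) with hB
            have hBne : B.Nonempty := Finset.card_pos.1 (by omega)
            set p' := B.min' hBne with hp'
            have hp'B : p' ∈ B := B.min'_mem hBne
            have hp'mem : p' ∈ P ∧ ((0 < p' ∧ p' < p) ∨ (p < p' ∧ p' < 0)) :=
              Finset.mem_filter.1 hp'B
            have hp'neg : p < p' ∧ p' < 0 := by
              rcases hp'mem.2 with ⟨h1, h2⟩ | h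
              · exfalso; linarith
              · exact h
            -- suc P p' = p
            have hsucspec := suc_spec_neg hp'neg.2 ⟨p, hp, hp'neg.1⟩
            have hsuceq : suc P p' = p := by
              have h1 : p ≤ suc P p' := hsucspec.2.2 p hp hp'neg.1
              rcases eq_or_lt_of_le h1 with h | h
              · exact h.symm
              · exfalso
                have hm : suc P p' ∈ B :=
                  Finset.mem_filter.2 ⟨hsucspec.1, Or.inr ⟨h, by linarith [hsucspec.2.1]⟩⟩
                have := B.min'_le _ hm
                linarith [hsucspec.2.1]
            have hHasSuc : HasSuc P p' := Or.inr ⟨hp'neg.2, p, hp, hp'neg.1⟩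
            -- p' is reachable by induction
            have hB' : (P.filter (fun q => (0 < q ∧ q < p') ∨ (p' < q ∧ q < 0))).card ≤ n := by
              have hsub : (P.filter (fun q => (0 < q ∧ q < p') ∨ (p' < q ∧ q < 0))) ⊆ B.erase p' := by
                intro q hq
                have hq' := Finset.mem_filter.1 hq
                rcases hq'.2 with ⟨h1, h2⟩ | ⟨h1, h2⟩
                · exfalso; linarith [hp'neg.2]
                · refine Finset.mem_erase.2 ⟨by linarith, Finset.mem_filter.2 ⟨hq'.1, Or.inr ⟨by linarith [hp'neg.1], h2⟩⟩⟩
              calc (P.filter (fun q => (0 < q ∧ q < p') ∨ (p' < q ∧ q < 0))).card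
                  ≤ (B.erase p').card := Finset.card_le_card hsub
                _ ≤ B.card - 1 := le_of_eq (Finset.card_erase_of_mem hp'B)
                _ ≤ n := by omega
            have hreach' := ih p' hp'mem.1 hB'
            by_cases hexp : Expensive δ P p'
            · -- direct jump from source
              have hle : -p ≤ dmax δ P := by
                have := le_dmax (mem_dcand_exp (δ := δ) hp'mem.1 (by linarith [hp'neg.2] : p' ≠ 0) hexp)
                rw [hsuceq] at this
                rw [abs_of_neg hneg] at this
                exact this
              apply reach_step (reach_zero hP) hp
              rw [Real.dist_eq, rsb_zero, abs_of_nonneg (by linarith : (0:ℝ) ≤ 0 - p)]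
              linarith
            · apply reach_step hreach' hp
              rw [Real.dist_eq]
              have h0' : p' ≠ 0 := by linarith [hp'neg.2]
              simp only [rsb, if_neg h0', if_neg hexp, standardRange, if_pos hHasSuc, hsuceq]
              rw [abs_of_nonneg (by linarith [hp'neg.1]), abs_of_nonpos (by linarith [hp'neg.1])]
              linarith
          · subst hzero; exact reach_zero hP
          · set B := P.filter (fun q => (0 < q ∧ q < p) ∨ (p < q ∧ q < 0)) with hB
            have hBne : B.Nonempty := Finset.card_pos.1 (by omega)
            set p' := B.max' hBne with hp'
            have hp'B : p' ∈ B := B.max'_mem hBne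
            have hp'mem : p' ∈ P ∧ ((0 < p' ∧ p' < p) ∨ (p < p' ∧ p' < 0)) :=
              Finset.mem_filter.1 hp'B
            have hp'pos : 0 < p' ∧ p' < p := by
              rcases hp'mem.2 with h | ⟨h1, h2⟩
              · exact h
              · exfalso; linarith
            have hsucspec := suc_spec_pos hp'pos.1 ⟨p, hp, hp'pos.2⟩
            have hsuceq : suc P p' = p := by
              have h1 : suc P p' ≤ p := hsucspec.2.2 p hp hp'pos.2
              rcases eq_or_lt_of_le h1 with h | h
              · exact h
              · exfalso
                have hm : suc P p' ∈ B :=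
                  Finset.mem_filter.2 ⟨hsucspec.1, Or.inl ⟨by linarith [hsucspec.2.1], h⟩⟩
                have := B.le_max' _ hm
                linarith [hsucspec.2.1]
            have hHasSuc : HasSuc P p' := Or.inl ⟨hp'pos.1, p, hp, hp'pos.2⟩
            have hB' : (P.filter (fun q => (0 < q ∧ q < p') ∨ (p' < q ∧ q < 0))).card ≤ n := by
              have hsub : (P.filter (fun q => (0 < q ∧ q < p') ∨ (p' < q ∧ q < 0))) ⊆ B.erase p' := by
                intro q hq
                have hq' := Finset.mem_filter.1 hq
                rcases hq'.2 with ⟨h1, h2⟩ | ⟨h1, h2⟩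
                · refine Finset.mem_erase.2 ⟨by linarith, Finset.mem_filter.2 ⟨hq'.1, Or.inl ⟨h1, by linarith [hp'pos.2]⟩⟩⟩
                · exfalso; linarith [hp'pos.1]
              calc (P.filter (fun q => (0 < q ∧ q < p') ∨ (p' < q ∧ q < 0))).card
                  ≤ (B.erase p').card := Finset.card_le_card hsub
                _ ≤ B.card - 1 := le_of_eq (Finset.card_erase_of_mem hp'B)
                _ ≤ n := by omega
            have hreach' := ih p' hp'mem.1 hB'
            by_cases hexp : Expensive δ P p'
            · have hle : p ≤ dmax δ P := by
                have := le_dmax (mem_dcand_exp (δ := δ) hp'mem.1 (by linarith [hp'pos.1] : p' ≠ 0) hexp)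
                rw [hsuceq, abs_of_pos hpos] at this
                exact this
              apply reach_step (reach_zero hP) hp
              rw [Real.dist_eq, rsb_zero, abs_of_nonpos (by linarith : 0 - p ≤ (0:ℝ))]
              linarith
            · apply reach_step hreach' hp
              rw [Real.dist_eq]
              have h0' : p' ≠ 0 := by linarith [hp'pos.1]
              simp only [rsb, if_neg h0', if_neg hexp, standardRange, if_pos hHasSuc, hsuceq]
              rw [abs_of_nonpos (by linarith [hp'pos.2]), abs_of_nonneg (by linarith [hp'pos.2])]
              linarith
    exact key _ p hp le_rfl

lemma crossing_pos {P : Finset ℝ} {ρ : ℝ → ℝ} (hρ : Feasible P 0 ρ) {t : ℝ}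
    (ht : t ∈ P) (h0 : 0 < t) : ∃ x ∈ P, x < t ∧ t - x ≤ ρ x := by
  classical
  obtain ⟨m, f, hf0, hfm, hmem, hstep⟩ := hρ.2 t ht
  have hex : ∃ j, j ≤ m ∧ t ≤ f j := ⟨m, le_rfl, by rw [hfm]⟩
  obtain ⟨hjm, hjt⟩ := Nat.find_spec hex
  set j := Nat.find hex with hj
  have hj0 : j ≠ 0 := by
    intro h
    rw [h, hf0] at hjt
    linarith
  have hjpred : ¬(j - 1 ≤ m ∧ t ≤ f (j - 1)) := Nat.find_min hex (by omega)
  have hpredm : j - 1 ≤ m := by omega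
  have hpredlt : f (j - 1) < t := by
    by_contra h
    exact hjpred ⟨hpredm, by linarith⟩
  refine ⟨f (j - 1), hmem _ hpredm, hpredlt, ?_⟩
  have hstep' := hstep (j - 1) (by omega)
  rw [Real.dist_eq] at hstep'
  have : j - 1 + 1 = j := by omega
  rw [this] at hstep'
  calc t - f (j - 1) ≤ f j - f (j - 1) := by linarith
    _ ≤ |f (j - 1) - f j| := by rw [abs_sub_comm]; exact le_abs_self _
    _ ≤ ρ (f (j - 1)) := hstep'

lemma crossing_neg {P : Finset ℝ} {ρ : ℝ → ℝ} (hρ : Feasible P 0 ρ) {t : ℝ}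
    (ht : t ∈ P) (h0 : t < 0) : ∃ x ∈ P, t < x ∧ x - t ≤ ρ x := by
  classical
  obtain ⟨m, f, hf0, hfm, hmem, hstep⟩ := hρ.2 t ht
  have hex : ∃ j, j ≤ m ∧ f j ≤ t := ⟨m, le_rfl, by rw [hfm]⟩
  obtain ⟨hjm, hjt⟩ := Nat.find_spec hex
  set j := Nat.find hex with hj
  have hj0 : j ≠ 0 := by
    intro h
    rw [h, hf0] at hjt
    linarith
  have hjpred : ¬(j - 1 ≤ m ∧ f (j - 1) ≤ t) := Nat.find_min hex (by omega)
  have hpredm : j - 1 ≤ m := by omega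
  have hpredlt : t < f (j - 1) := by
    by_contra h
    exact hjpred ⟨hpredm, by linarith⟩
  refine ⟨f (j - 1), hmem _ hpredm, hpredlt, ?_⟩
  have hstep' := hstep (j - 1) (by omega)
  rw [Real.dist_eq] at hstep'
  have : j - 1 + 1 = j := by omega
  rw [this] at hstep'
  calc f (j - 1) - t ≤ f (j - 1) - f j := by linarith
    _ ≤ |f (j - 1) - f j| := le_abs_self _
    _ ≤ ρ (f (j - 1)) := hstep'

lemma sum_len_le (S : Finset ℝ) (f : ℝ → ℝ) (lo hi : ℝ)
    (hlo : ∀ p ∈ S, lo ≤ p) (hf : ∀ p ∈ S, p < f p) (hhi : ∀ p ∈ S, f p ≤ hi)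
    (hsep : ∀ p ∈ S, ∀ q ∈ S, p < q → f p ≤ q) :
    ∑ p ∈ S, (f p - p) ≤ max 0 (hi - lo) := by
  classical
  obtain ⟨n, hn⟩ : ∃ n, S.card = n := ⟨_, rfl⟩
  induction n generalizing S hi with
  | zero =>
    rw [Finset.card_eq_zero.1 hn]
    simp [le_max_left]
  | succ n ih =>
    have hSne : S.Nonempty := Finset.card_pos.1 (by omega)
    set m := S.max' hSne with hm
    have hmS : m ∈ S := S.max'_mem hSne
    have herase : ∑ p ∈ S.erase m, (f p - p) + (f m - m) = ∑ p ∈ S, (f p - p) :=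
      Finset.sum_erase_add S _ hmS
    have hcard : (S.erase m).card = n := by
      rw [Finset.card_erase_of_mem hmS]; omega
    have hstep : ∑ p ∈ S.erase m, (f p - p) ≤ max 0 (m - lo) := by
      apply ih
      · exact fun p hp => hlo p (Finset.mem_of_mem_erase hp)
      · exact fun p hp => hf p (Finset.mem_of_mem_erase hp)
      · intro p hp
        have hpS := Finset.mem_of_mem_erase hp
        have hpm : p < m := lt_of_le_of_ne (S.le_max' p hpS) (Finset.ne_of_mem_erase hp)
        exact hsep p hpS m hmS hpm
      · exact fun p hp q hq hpq =>
          hsep p (Finset.mem_of_mem_erase hp) q (Finset.mem_of_mem_erase hq) hpq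
      · exact hcard
    have hlm : lo ≤ m := hlo m hmS
    have h1 : max 0 (m - lo) = m - lo := max_eq_right (by linarith)
    have h2 : f m ≤ hi := hhi m hmS
    have h3 : lo ≤ hi := le_trans hlm (le_trans (hf m hmS).le h2)
    rw [h1] at hstep
    rw [← herase]
    rw [max_eq_right (by linarith : (0:ℝ) ≤ hi - lo)]
    linarith

lemma sum_len_le' (S : Finset ℝ) (f : ℝ → ℝ) (lo hi : ℝ)
    (hhi : ∀ p ∈ S, p ≤ hi) (hf : ∀ p ∈ S, f p < p) (hlo : ∀ p ∈ S, lo ≤ f p)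
    (hsep : ∀ p ∈ S, ∀ q ∈ S, q < p → q ≤ f p) :
    ∑ p ∈ S, (p - f p) ≤ max 0 (hi - lo) := by
  classical
  obtain ⟨n, hn⟩ : ∃ n, S.card = n := ⟨_, rfl⟩
  induction n generalizing S lo with
  | zero =>
    rw [Finset.card_eq_zero.1 hn]
    simp [le_max_left]
  | succ n ih =>
    have hSne : S.Nonempty := Finset.card_pos.1 (by omega)
    set m := S.min' hSne with hm
    have hmS : m ∈ S := S.min'_mem hSne
    have herase : ∑ p ∈ S.erase m, (p - f p) + (m - f m) = ∑ p ∈ S, (p - f p) :=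
      Finset.sum_erase_add S _ hmS
    have hcard : (S.erase m).card = n := by
      rw [Finset.card_erase_of_mem hmS]; omega
    have hstep : ∑ p ∈ S.erase m, (p - f p) ≤ max 0 (hi - m) := by
      apply ih
      · exact fun p hp => hhi p (Finset.mem_of_mem_erase hp)
      · exact fun p hp => hf p (Finset.mem_of_mem_erase hp)
      · intro p hp
        have hpS := Finset.mem_of_mem_erase hp
        have hpm : m < p := lt_of_le_of_ne (S.min'_le p hpS) (Ne.symm (Finset.ne_of_mem_erase hp))
        exact hsep p hpS m hmS hpm
      · exact fun p hp q hq hpq =>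
          hsep p (Finset.mem_of_mem_erase hp) q (Finset.mem_of_mem_erase hq) hpq
      · exact hcard
    have hlm : m ≤ hi := hhi m hmS
    have h1 : max 0 (hi - m) = hi - m := max_eq_right (by linarith)
    have h2 : lo ≤ f m := hlo m hmS
    have h3 : lo ≤ hi := le_trans h2 (le_trans (hf m hmS).le hlm)
    rw [h1] at hstep
    rw [← herase]
    rw [max_eq_right (by linarith : (0:ℝ) ≤ hi - lo)]
    linarith

lemma sum_sq_le_mul (S : Finset ℝ) (g : ℝ → ℝ) (K : ℝ)
    (hg : ∀ p ∈ S, 0 ≤ g p) (hK : ∀ p ∈ S, g p ≤ K) :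
    ∑ p ∈ S, (g p)^2 ≤ K * ∑ p ∈ S, g p := by
  rw [Finset.mul_sum]
  apply Finset.sum_le_sum
  intro p hp
  have := hg p hp
  have := hK p hp
  nlinarith

lemma sum_sq_le_sq (S : Finset ℝ) (g : ℝ → ℝ) (hg : ∀ p ∈ S, 0 ≤ g p) :
    ∑ p ∈ S, (g p)^2 ≤ (∑ p ∈ S, g p)^2 := by
  have h := sum_sq_le_mul S g (∑ p ∈ S, g p) hg
    (fun p hp => Finset.single_le_sum hg hp)
  calc ∑ p ∈ S, (g p)^2 ≤ (∑ p ∈ S, g p) * ∑ p ∈ S, g p := h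
    _ = (∑ p ∈ S, g p)^2 := (sq _).symm

lemma genLem (δ r x a b SA SB : ℝ) (hδ : 1/2 < δ) (hδ1 : δ < 1) (hr : 0 ≤ r) (hx : 0 ≤ x)
    (ha : 0 ≤ a) (har : a ≤ r) (hb : 0 ≤ b) (hbr : b ≤ max 0 (r - x))
    (hSA1 : SA ≤ a^2) (hSA2 : SA ≤ δ*(x+r)*a)
    (hSB1 : SB ≤ b^2) (hSB2 : SB ≤ δ*(max 0 (r-x))*b) :
    SA + SB ≤ (1+δ)*r^2 := by
  have hδ0 : (0:ℝ) < δ := by linarith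
  rcases le_or_gt x r with hxr | hxr
  · rw [max_eq_right (by linarith)] at hbr hSB2
    have h2 : SB ≤ δ*(r-x)*(r-x) :=
      le_trans hSB2 (mul_le_mul_of_nonneg_left hbr (mul_nonneg hδ0.le (by linarith)))
    rcases le_or_gt (δ*(x+r)) r with hc | hc
    · have h1 : SA ≤ δ*(x+r)*r :=
        le_trans hSA2 (mul_le_mul_of_nonneg_left har (mul_nonneg hδ0.le (by linarith)))
      nlinarith [mul_nonneg hx (by linarith : (0:ℝ) ≤ r - x), sq_nonneg r]
    · have h1 : SA ≤ r^2 := le_trans hSA1 (by nlinarith)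
      nlinarith [mul_nonneg hx (by linarith : (0:ℝ) ≤ r - x), sq_nonneg (r-x)]
  · rw [max_eq_left (by linarith)] at hbr hSB2
    have hb0 : b = 0 := le_antisymm hbr hb
    subst hb0
    nlinarith [sq_nonneg (r-a)]

lemma posyPoly (δ d t r : ℝ) (hδ : 1/2 < δ) (hδ1 : δ < 1) (hd : 0 < d)
    (ht : 0 ≤ t) (htp : t ≤ (1-δ)*d) (hr : d-t ≤ r) :
    δ^2*(d^2 + δ*((1-δ)*d)*((1-δ)*d-t) + (t+r-d)^2 + δ*(r-t)^2)
      ≤ ((1+δ)*δ^2+(1+5*δ)*(1-δ)^2)*r^2 := by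
  have he1 : (0:ℝ) < 1-δ := by linarith
  have h2 : (0:ℝ) < 2*δ-1 := by linarith
  have hu : 0 ≤ t+r-d := by linarith
  -- B ≥ 0
  have hB : 0 ≤ (2-4*(1-δ)+14*(1-δ)^2-10*(1-δ)^3)*d - 2*(1-δ)*(1+4*(1-δ)-4*(1-δ)^2)*t := by
    nlinarith [mul_nonneg (mul_nonneg he1.le he1.le) (sub_nonneg.2 htp), sq_nonneg (1-δ),
      mul_nonneg (mul_nonneg he1.le h2.le) hd.le, mul_nonneg (sq_nonneg (1-δ)) hd.le,
      mul_nonneg (mul_nonneg (mul_nonneg he1.le he1.le) h2.le) hd.le,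
      mul_nonneg (mul_nonneg (sq_nonneg (1-δ)) (sq_nonneg (2*δ-1))) hd.le]
  -- C ≥ 0
  have hC : 0 ≤ ((1-δ)*(1+4*(1-δ)-4*(1-δ)^2) - 2*δ^3)*t^2
      - (1-δ)*(1+11*(1-δ)-11*(1-δ)^2+(1-δ)^3)*(d*t)
      + (1-δ)^2*(5-2*(1-δ)-3*(1-δ)^2+(1-δ)^3)*d^2 := by
    rcases le_or_gt ((1-δ)*(1+4*(1-δ)-4*(1-δ)^2)) (2*δ^3) with hα | hα
    · have key : ((1-δ)*d)*( ((1-δ)*(1+4*(1-δ)-4*(1-δ)^2) - 2*δ^3)*t^2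
          - (1-δ)*(1+11*(1-δ)-11*(1-δ)^2+(1-δ)^3)*(d*t)
          + (1-δ)^2*(5-2*(1-δ)-3*(1-δ)^2+(1-δ)^3)*d^2 )
          = ((1-δ)*d-t)*((1-δ)^2*(5-2*(1-δ)-3*(1-δ)^2+(1-δ)^3)*d^2)
          + t*(2*δ^3*(1-δ)^2*d^2)
          + (2*δ^3 - (1-δ)*(1+4*(1-δ)-4*(1-δ)^2))*(((1-δ)*d)*(t*((1-δ)*d-t))) := by
        ring
      have hC4 : (0:ℝ) ≤ 5-2*(1-δ)-3*(1-δ)^2+(1-δ)^3 := by nlinarith [sq_nonneg (1-δ), pow_nonneg he1.le 3]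
      have t1 : 0 ≤ ((1-δ)*d-t)*((1-δ)^2*(5-2*(1-δ)-3*(1-δ)^2+(1-δ)^3)*d^2) :=
        mul_nonneg (by linarith) (mul_nonneg (mul_nonneg (sq_nonneg _) hC4) (sq_nonneg d))
      have t2 : 0 ≤ t*(2*δ^3*(1-δ)^2*d^2) :=
        mul_nonneg ht (by positivity)
      have t3 : 0 ≤ (2*δ^3 - (1-δ)*(1+4*(1-δ)-4*(1-δ)^2))*(((1-δ)*d)*(t*((1-δ)*d-t))) :=
        mul_nonneg (by linarith) (mul_nonneg (by positivity) (mul_nonneg ht (by linarith)))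
      have hpos : 0 < (1-δ)*d := by positivity
      nlinarith [key, t1, t2, t3, hpos]
    · have key : ((1-δ)*(1+4*(1-δ)-4*(1-δ)^2) - 2*δ^3)*t^2
          - (1-δ)*(1+11*(1-δ)-11*(1-δ)^2+(1-δ)^3)*(d*t)
          + (1-δ)^2*(5-2*(1-δ)-3*(1-δ)^2+(1-δ)^3)*d^2
          = 2*δ^3*(1-δ)^2*d^2
          + ((1-δ)*d-t)*((1-δ)*d*(5-3*(1-δ)-7*(1-δ)^2+5*(1-δ)^3))
          + ((1-δ)*(1+4*(1-δ)-4*(1-δ)^2) - 2*δ^3)*((1-δ)*d-t)^2 := by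
        ring
      have hq : (0:ℝ) ≤ 5-3*(1-δ)-7*(1-δ)^2+5*(1-δ)^3 := by nlinarith [sq_nonneg (1-δ), pow_nonneg he1.le 3]
      have t1 : 0 ≤ ((1-δ)*d-t)*((1-δ)*d*(5-3*(1-δ)-7*(1-δ)^2+5*(1-δ)^3)) :=
        mul_nonneg (by linarith) (mul_nonneg (by positivity) hq)
      have t2 : 0 ≤ ((1-δ)*(1+4*(1-δ)-4*(1-δ)^2) - 2*δ^3)*((1-δ)*d-t)^2 :=
        mul_nonneg (by linarith) (sq_nonneg _)
      have t0 : (0:ℝ) ≤ 2*δ^3*(1-δ)^2*d^2 := by positivity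
      linarith [key, t0, t1, t2]
  -- assemble
  have hA : 0 ≤ ((1-δ)^2*(1+5*δ))*(t+r-d)^2 := by positivity
  have hBu : 0 ≤ ((2-4*(1-δ)+14*(1-δ)^2-10*(1-δ)^3)*d - 2*(1-δ)*(1+4*(1-δ)-4*(1-δ)^2)*t)*(t+r-d) :=
    mul_nonneg hB hu
  have key : ((1+δ)*δ^2+(1+5*δ)*(1-δ)^2)*r^2
      - δ^2*(d^2 + δ*((1-δ)*d)*((1-δ)*d-t) + (t+r-d)^2 + δ*(r-t)^2)
      = ((1-δ)^2*(1+5*δ))*(t+r-d)^2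
      + ((2-4*(1-δ)+14*(1-δ)^2-10*(1-δ)^3)*d - 2*(1-δ)*(1+4*(1-δ)-4*(1-δ)^2)*t)*(t+r-d)
      + ( ((1-δ)*(1+4*(1-δ)-4*(1-δ)^2) - 2*δ^3)*t^2
          - (1-δ)*(1+11*(1-δ)-11*(1-δ)^2+(1-δ)^3)*(d*t)
          + (1-δ)^2*(5-2*(1-δ)-3*(1-δ)^2+(1-δ)^3)*d^2 ) := by
    ring
  linarith [hA, hBu, hC, key]

lemma negPolyA (δ d s u : ℝ) (hδ : 1/2 < δ) (hδ1 : δ < 1) (hd : 0 < d) (hs : 0 ≤ s) (hu : 0 ≤ u) :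
    δ^2*(d^2*(1+δ*(1-δ)^2) + u^2 + δ*((d+s+u)+s)*(d+s+u))
      ≤ ((1+δ)*δ^2+(1+5*δ)*(1-δ)^2)*(d+s+u)^2 := by
  have h0 : (0:ℝ) < 1-δ := by linarith
  have h2 : (0:ℝ) ≤ 1-2*(1-δ) := by linarith
  -- coefficients in e = 1-δ : u2: e^2(6-5e); su: 1-e+11e^2-9e^3; s2: e(1+4e-4e^2);
  -- du: 2-4e+14e^2-10e^3 ; ds: 1-e+11e^2-9e^3 ; d2: e^2(5-2e-3e^2+e^3)
  have c1 : 0 ≤ ((1-δ)^2*(6-5*(1-δ))) * u^2 := by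
    have : (0:ℝ) ≤ 6-5*(1-δ) := by linarith
    exact mul_nonneg (mul_nonneg (sq_nonneg _) this) (sq_nonneg u)
  have c2 : 0 ≤ (1-(1-δ)+11*(1-δ)^2-9*(1-δ)^3) * (s*u) := by
    have : (0:ℝ) ≤ 1-(1-δ)+11*(1-δ)^2-9*(1-δ)^3 := by nlinarith [sq_nonneg (1-δ), mul_nonneg (sq_nonneg (1-δ)) h2]
    exact mul_nonneg this (mul_nonneg hs hu)
  have c3 : 0 ≤ ((1-δ)*(1+4*(1-δ)-4*(1-δ)^2)) * s^2 := by nlinarith [sq_nonneg s, mul_nonneg (mul_nonneg h0.le h2) (sq_nonneg s), sq_nonneg ((1-δ)*s)]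
  have c4 : 0 ≤ (2-4*(1-δ)+14*(1-δ)^2-10*(1-δ)^3) * (d*u) := by
    have : (0:ℝ) ≤ 2-4*(1-δ)+14*(1-δ)^2-10*(1-δ)^3 := by nlinarith [mul_nonneg (sq_nonneg (1-δ)) h2]
    exact mul_nonneg this (mul_nonneg hd.le hu)
  have c5 : 0 ≤ (1-(1-δ)+11*(1-δ)^2-9*(1-δ)^3) * (d*s) := by
    have : (0:ℝ) ≤ 1-(1-δ)+11*(1-δ)^2-9*(1-δ)^3 := by nlinarith [sq_nonneg (1-δ), mul_nonneg (sq_nonneg (1-δ)) h2]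
    exact mul_nonneg this (mul_nonneg hd.le hs)
  have c6 : 0 ≤ ((1-δ)^2*(5-2*(1-δ)-3*(1-δ)^2+(1-δ)^3)) * d^2 := by
    have h : (0:ℝ) ≤ 5-2*(1-δ)-3*(1-δ)^2+(1-δ)^3 := by nlinarith [sq_nonneg (1-δ), pow_nonneg h0.le 3]
    exact mul_nonneg (mul_nonneg (sq_nonneg _) h) (sq_nonneg d)
  linarith [c1,c2,c3,c4,c5,c6,
    (by ring : ((1+δ)*δ^2+(1+5*δ)*(1-δ)^2)*(d+s+u)^2
      - δ^2*(d^2*(1+δ*(1-δ)^2) + u^2 + δ*((d+s+u)+s)*(d+s+u))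
      = ((1-δ)^2*(6-5*(1-δ))) * u^2 + (1-(1-δ)+11*(1-δ)^2-9*(1-δ)^3) * (s*u)
      + ((1-δ)*(1+4*(1-δ)-4*(1-δ)^2)) * s^2 + (2-4*(1-δ)+14*(1-δ)^2-10*(1-δ)^3) * (d*u)
      + (1-(1-δ)+11*(1-δ)^2-9*(1-δ)^3) * (d*s) + ((1-δ)^2*(5-2*(1-δ)-3*(1-δ)^2+(1-δ)^3)) * d^2)]

lemma negPolyB (δ d s u : ℝ) (hδ : 1/2 < δ) (hδ1 : δ < 1) (hd : 0 < d) (hs : 0 ≤ s) (hu : 0 ≤ u)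
    (hc : (d+s+u) ≤ δ*((d+s+u)+s)) :
    δ^2*(d^2*(1+δ*(1-δ)^2) + u^2 + (d+s+u)^2)
      ≤ ((1+δ)*δ^2+(1+5*δ)*(1-δ)^2)*(d+s+u)^2 := by
  have he1 : (0:ℝ) < 1-δ := by linarith
  have h2 : (0:ℝ) < 2*δ-1 := by linarith
  have hv : 0 ≤ (2*δ-1)*s - (1-δ)*(d+u) := by nlinarith [hc]
  have p1 : (0:ℝ) ≤ 1-3*(1-δ)+9*(1-δ)^2-6*(1-δ)^3 := by nlinarith [sq_nonneg (3*(1-δ)-1), mul_nonneg (sq_nonneg (1-δ)) h2.le]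
  have p2 : (0:ℝ) ≤ 2-8*(1-δ)+24*(1-δ)^2-30*(1-δ)^3+12*(1-δ)^4 := by nlinarith [sq_nonneg (3*(1-δ)-1), mul_nonneg (sq_nonneg (1-δ)) h2.le, sq_nonneg ((1-δ)*(2*δ-1)), sq_nonneg (2*(1-δ)-1)]
  have p3 : (0:ℝ) ≤ 1+3*(1-δ)-15*(1-δ)^2+17*(1-δ)^3-6*(1-δ)^4 := by nlinarith [mul_nonneg (sq_nonneg (1-δ)) h2.le, sq_nonneg ((1-δ)*(2*δ-1)), mul_nonneg (mul_nonneg he1.le he1.le) h2.le, sq_nonneg (3*(1-δ)-1)]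
  have p4 : (0:ℝ) ≤ 2-10*(1-δ)+32*(1-δ)^2-54*(1-δ)^3+42*(1-δ)^4-12*(1-δ)^5 := by nlinarith [mul_nonneg (sq_nonneg (1-δ)) h2.le, sq_nonneg ((1-δ)*(2*δ-1)), sq_nonneg (3*(1-δ)-1), mul_nonneg (mul_nonneg he1.le (sq_nonneg (2*δ-1))) he1.le]
  have p5 : (0:ℝ) ≤ 1+2*(1-δ)-8*(1-δ)^2-2*(1-δ)^3+19*(1-δ)^4-16*(1-δ)^5+4*(1-δ)^6 := by nlinarith [mul_nonneg (sq_nonneg (1-δ)) h2.le, sq_nonneg ((1-δ)*(2*δ-1)), sq_nonneg (3*(1-δ)-1), mul_nonneg (mul_nonneg he1.le (sq_nonneg (2*δ-1))) he1.le, sq_nonneg ((1-δ)^2*(2*δ-1)), sq_nonneg ((1-δ)*(1-3*(1-δ)))]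
  have c1 := mul_nonneg p1 (sq_nonneg ((2*δ-1)*s - (1-δ)*(d+u)))
  have c2 := mul_nonneg p2 (mul_nonneg hu hv)
  have c3 := mul_nonneg (mul_nonneg he1.le p3) (sq_nonneg u)
  have c4 := mul_nonneg p2 (mul_nonneg hd.le hv)
  have c5 := mul_nonneg p4 (mul_nonneg hd.le hu)
  have c6 := mul_nonneg (mul_nonneg he1.le p5) (sq_nonneg d)
  have key : (((1+δ)*δ^2+(1+5*δ)*(1-δ)^2)*(d+s+u)^2
      - δ^2*(d^2*(1+δ*(1-δ)^2) + u^2 + (d+s+u)^2)) * (2*δ-1)^2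
      = (1-3*(1-δ)+9*(1-δ)^2-6*(1-δ)^3) * ((2*δ-1)*s - (1-δ)*(d+u))^2
      + (2-8*(1-δ)+24*(1-δ)^2-30*(1-δ)^3+12*(1-δ)^4) * (u*((2*δ-1)*s - (1-δ)*(d+u)))
      + ((1-δ)*(1+3*(1-δ)-15*(1-δ)^2+17*(1-δ)^3-6*(1-δ)^4)) * u^2
      + (2-8*(1-δ)+24*(1-δ)^2-30*(1-δ)^3+12*(1-δ)^4) * (d*((2*δ-1)*s - (1-δ)*(d+u)))
      + (2-10*(1-δ)+32*(1-δ)^2-54*(1-δ)^3+42*(1-δ)^4-12*(1-δ)^5) * (d*u)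
      + ((1-δ)*(1+2*(1-δ)-8*(1-δ)^2-2*(1-δ)^3+19*(1-δ)^4-16*(1-δ)^5+4*(1-δ)^6)) * d^2 := by
    ring
  have hsq : (0:ℝ) < (2*δ-1)^2 := by positivity
  have hprod : 0 ≤ (((1+δ)*δ^2+(1+5*δ)*(1-δ)^2)*(d+s+u)^2
      - δ^2*(d^2*(1+δ*(1-δ)^2) + u^2 + (d+s+u)^2)) * (2*δ-1)^2 := by
    rw [key]; linarith
  have := le_of_mul_le_mul_right (by linarith [hprod] :
      0*((2*δ-1)^2) ≤ (((1+δ)*δ^2+(1+5*δ)*(1-δ)^2)*(d+s+u)^2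
      - δ^2*(d^2*(1+δ*(1-δ)^2) + u^2 + (d+s+u)^2)) * ((2*δ-1)^2)) hsq
  linarith

lemma hasSuc_pos_ex {P : Finset ℝ} {p : ℝ} (hp : 0 < p) (h : HasSuc P p) :
    ∃ q ∈ P, p < q := by
  rcases h with ⟨_, hex⟩ | ⟨hneg, _⟩
  · exact hex
  · linarith

lemma hasSuc_neg_ex {P : Finset ℝ} {p : ℝ} (hp : p < 0) (h : HasSuc P p) :
    ∃ q ∈ P, q < p := by
  rcases h with ⟨hpos, _⟩ | ⟨_, hex⟩
  · linarith
  · exact hex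

lemma cheap_pos_gap {δ : ℝ} {P : Finset ℝ} {p : ℝ} (hδ0 : 0 ≤ δ) (hp : 0 < p)
    (hs : HasSuc P p) (hc : ¬Expensive δ P p) : suc P p - p ≤ δ * suc P p := by
  have hspec := suc_spec_pos hp (hasSuc_pos_ex hp hs)
  have h1 : ¬(δ * |suc P p| < |suc P p - p|) := fun h => hc ⟨hs, h⟩
  push_neg at h1
  rw [abs_of_pos (by linarith [hspec.2.1] : 0 < suc P p),
    abs_of_pos (by linarith [hspec.2.1] : 0 < suc P p - p)] at h1
  exact h1

lemma cheap_neg_gap {δ : ℝ} {P : Finset ℝ} {p : ℝ} (hδ0 : 0 ≤ δ) (hp : p < 0)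
    (hs : HasSuc P p) (hc : ¬Expensive δ P p) : p - suc P p ≤ δ * (-(suc P p)) := by
  have hspec := suc_spec_neg hp (hasSuc_neg_ex hp hs)
  have h1 : ¬(δ * |suc P p| < |suc P p - p|) := fun h => hc ⟨hs, h⟩
  push_neg at h1
  rw [abs_of_neg (by linarith [hspec.2.1] : suc P p < 0),
    abs_of_neg (by linarith [hspec.2.1] : suc P p - p < 0)] at h1
  linarith

lemma fiberA (δ : ℝ) (hδ0 : 0 ≤ δ) (P : Finset ℝ) (S : Finset ℝ)
    (hS : ∀ p ∈ S, p ∈ P ∧ 0 < p ∧ HasSuc P p ∧ ¬Expensive δ P p)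
    (lo hi : ℝ) (hlo : ∀ p ∈ S, lo ≤ p) (hhi : ∀ p ∈ S, suc P p ≤ hi) :
    ∃ aa : ℝ, 0 ≤ aa ∧ aa ≤ max 0 (hi - lo) ∧
      (∑ p ∈ S, (suc P p - p)^2 ≤ aa^2) ∧
      (∑ p ∈ S, (suc P p - p)^2 ≤ (δ*hi) * aa) := by
  have hspec : ∀ p ∈ S, suc P p ∈ P ∧ p < suc P p ∧ ∀ q ∈ P, p < q → suc P p ≤ q :=
    fun p hp => suc_spec_pos (hS p hp).2.1 (hasSuc_pos_ex (hS p hp).2.1 (hS p hp).2.2.1)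
  have hgap0 : ∀ p ∈ S, 0 ≤ suc P p - p := fun p hp => (by linarith [(hspec p hp).2.1])
  refine ⟨∑ p ∈ S, (suc P p - p), Finset.sum_nonneg hgap0, ?_, ?_, ?_⟩
  · exact sum_len_le S (suc P) lo hi hlo (fun p hp => (hspec p hp).2.1) hhi
      (fun p hp q hq hpq => (hspec p hp).2.2 q (hS q hq).1 hpq)
  · exact sum_sq_le_sq S _ hgap0
  · apply sum_sq_le_mul S _ _ hgap0
    intro p hp
    calc suc P p - p ≤ δ * suc P p :=
          cheap_pos_gap hδ0 (hS p hp).2.1 (hS p hp).2.2.1 (hS p hp).2.2.2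
      _ ≤ δ * hi := mul_le_mul_of_nonneg_left (hhi p hp) hδ0

lemma fiberB (δ : ℝ) (hδ0 : 0 ≤ δ) (P : Finset ℝ) (S : Finset ℝ)
    (hS : ∀ p ∈ S, p ∈ P ∧ p < 0 ∧ HasSuc P p ∧ ¬Expensive δ P p)
    (lo hi : ℝ) (hlo : ∀ p ∈ S, lo ≤ suc P p) (hhi : ∀ p ∈ S, p ≤ hi) :
    ∃ bb : ℝ, 0 ≤ bb ∧ bb ≤ max 0 (hi - lo) ∧
      (∑ p ∈ S, (suc P p - p)^2 ≤ bb^2) ∧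
      (∑ p ∈ S, (suc P p - p)^2 ≤ (δ*(-lo)) * bb) := by
  have hspec : ∀ p ∈ S, suc P p ∈ P ∧ suc P p < p ∧ ∀ q ∈ P, q < p → q ≤ suc P p :=
    fun p hp => suc_spec_neg (hS p hp).2.1 (hasSuc_neg_ex (hS p hp).2.1 (hS p hp).2.2.1)
  have hgap0 : ∀ p ∈ S, 0 ≤ p - suc P p := fun p hp => (by linarith [(hspec p hp).2.1])
  have hsq : ∀ p ∈ S, (suc P p - p)^2 = (p - suc P p)^2 := fun p _ => by ring
  rw [Finset.sum_congr rfl hsq]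
  refine ⟨∑ p ∈ S, (p - suc P p), Finset.sum_nonneg hgap0, ?_, ?_, ?_⟩
  · exact sum_len_le' S (suc P) lo hi hhi (fun p hp => (hspec p hp).2.1) hlo
      (fun p hp q hq hpq => (hspec p hp).2.2 q (hS q hq).1 hpq)
  · exact sum_sq_le_sq S _ hgap0
  · apply sum_sq_le_mul S _ _ hgap0
    intro p hp
    calc p - suc P p ≤ δ * (-(suc P p)) :=
          cheap_neg_gap hδ0 (hS p hp).2.1 (hS p hp).2.2.1 (hS p hp).2.2.2
      _ ≤ δ * (-lo) := mul_le_mul_of_nonneg_left (by linarith [hlo p hp]) hδ0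

lemma perx_gen (δ r x aa bb SA SB : ℝ) (hδ : 1/2 < δ) (hδ1 : δ < 1) (hr : 0 ≤ r)
    (ha : 0 ≤ aa) (ha' : aa ≤ max 0 (x + r - max x 0))
    (hSA1 : SA ≤ aa^2) (hSA2 : SA ≤ (δ*(x+r))*aa)
    (hb : 0 ≤ bb) (hb' : bb ≤ max 0 (min x 0 - (x - r)))
    (hSB1 : SB ≤ bb^2) (hSB2 : SB ≤ (δ*(-(x-r)))*bb) :
    SA + SB ≤ (1+δ)*r^2 := by
  have hδ0 : (0:ℝ) < δ := by linarith
  rcases le_or_gt 0 x with hx | hx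
  · have hmx : max x 0 = x := max_eq_left hx
    have hmn : min x 0 = 0 := min_eq_right hx
    rw [hmx] at ha'
    rw [hmn] at hb'
    have ha'' : aa ≤ r := le_trans ha' (by simp [hr])
    have hb'' : bb ≤ max 0 (r - x) := by
      have : x + r - x = r := by ring
      calc bb ≤ max 0 (0 - (x - r)) := hb'
        _ = max 0 (r - x) := by ring_nf
    refine genLem δ r x aa bb SA SB hδ hδ1 hr hx ha ha'' hb hb'' hSA1 (by linarith [hSA2]) hSB1 ?_
    calc SB ≤ (δ*(-(x-r)))*bb := hSB2
      _ ≤ δ*(max 0 (r-x))*bb := by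
          apply mul_le_mul_of_nonneg_right _ hb
          have h1 : -(x-r) ≤ max 0 (r-x) := by
            rw [show -(x-r) = r - x by ring]
            exact le_max_right _ _
          nlinarith [h1]
  · have hmx : max x 0 = 0 := max_eq_right hx.le
    have hmn : min x 0 = x := min_eq_left hx.le
    rw [hmx] at ha'
    rw [hmn] at hb'
    have hb'' : bb ≤ r := le_trans hb' (by simp [show x - (x - r) = r by ring, hr])
    have ha'' : aa ≤ max 0 (r - (-x)) := by
      calc aa ≤ max 0 (x + r - 0) := ha'
        _ = max 0 (r - (-x)) := by ring_nf
    have hsum := genLem δ r (-x) bb aa SB SA hδ hδ1 hr (by linarith) hb hb'' ha ha'' hSB1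
      (by calc SB ≤ (δ*(-(x-r)))*bb := hSB2
            _ = δ*(-x+r)*bb := by ring)
      hSA1
      (by calc SA ≤ (δ*(x+r))*aa := hSA2
            _ ≤ δ*(max 0 (r - (-x)))*aa := by
              apply mul_le_mul_of_nonneg_right _ ha
              have h1 : x + r ≤ max 0 (r - (-x)) := by
                rw [show r - (-x) = x + r by ring]
                exact le_max_right _ _
              nlinarith [h1])
    linarith

lemma perx_led (δ d y r pstar a1 a2 b SA1 SA2 SB : ℝ) (hδ : 1/2 < δ) (hδ1 : δ < 1)
    (hd : 0 < d) (hr0 : 0 ≤ r)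
    (hps0 : 0 ≤ pstar) (hps : pstar ≤ (1-δ)*d) (hyp : y ≤ pstar) (hr : d - y ≤ r)
    (ha1 : 0 ≤ a1) (ha1' : a1 ≤ max 0 (pstar - max y 0)) (hSA1 : SA1 ≤ (δ*pstar)*a1)
    (ha2 : 0 ≤ a2) (ha2' : a2 ≤ max 0 (y + r - d)) (hSA2 : SA2 ≤ a2^2)
    (hb : 0 ≤ b) (hb' : b ≤ max 0 (min y 0 - (y - r))) (hSB1 : SB ≤ b^2)
    (hSB2 : SB ≤ (δ*(-(y-r)))*b) :
    d^2 + (SA1 + SA2) + SB ≤ (1+δ+(1+5*δ)*(1-δ)^2/δ^2) * r^2 := by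
  have hδ0 : (0:ℝ) < δ := by linarith
  have hδ2 : (0:ℝ) < δ^2 := by positivity
  have hAeq : 1+δ+(1+5*δ)*(1-δ)^2/δ^2 = ((1+δ)*δ^2+(1+5*δ)*(1-δ)^2)/δ^2 := by
    field_simp
  rw [hAeq, div_mul_eq_mul_div, le_div_iff₀ hδ2]
  -- bound a2 : note y + r - d ≥ 0
  have hyrd : 0 ≤ y + r - d := by linarith
  have ha2'' : a2 ≤ y + r - d := le_trans ha2' (le_of_eq (max_eq_right hyrd))
  have hSA2' : SA2 ≤ (y + r - d)^2 := le_trans hSA2 (by nlinarith [ha2, ha2''])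
  rcases le_or_gt y 0 with hy | hy
  · -- NEG case : s := -y
    have hmx : max y 0 = 0 := max_eq_right hy
    have hmn : min y 0 = y := min_eq_left hy
    rw [hmx] at ha1'
    rw [hmn] at hb'
    rw [sub_zero] at ha1'
    have ha1'' : a1 ≤ pstar := le_trans ha1' (le_of_eq (max_eq_right hps0))
    have hSA1' : SA1 ≤ δ*((1-δ)*d)*((1-δ)*d) := by
      have hm : pstar*pstar ≤ ((1-δ)*d)*((1-δ)*d) := mul_self_le_mul_self hps0 hps
      calc SA1 ≤ (δ*pstar)*a1 := hSA1
        _ ≤ (δ*pstar)*pstar := mul_le_mul_of_nonneg_left ha1'' (by positivity)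
        _ = δ*(pstar*pstar) := by ring
        _ ≤ δ*(((1-δ)*d)*((1-δ)*d)) := mul_le_mul_of_nonneg_left hm hδ0.le
        _ = δ*((1-δ)*d)*((1-δ)*d) := by ring
    have hb'' : b ≤ r := by
      have : y - (y - r) = r := by ring
      rw [this] at hb'
      exact le_trans hb' (le_of_eq (max_eq_right hr0))
    have hs0 : (0:ℝ) ≤ -y := by linarith
    have hu0 : (0:ℝ) ≤ r - (-y) - d := by linarith
    have hreq : d + (-y) + (r - (-y) - d) = r := by ring
    rcases le_or_gt (δ*(r+(-y))) r with hcase | hcase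
    · -- use negPolyA
      have hSB' : SB ≤ δ*(r+(-y))*r := by
        have hbm : (0:ℝ) ≤ δ*(r + -y) := by positivity
        calc SB ≤ (δ*(-(y-r)))*b := hSB2
          _ = (δ*(r + -y))*b := by ring_nf
          _ ≤ (δ*(r + -y))*r := mul_le_mul_of_nonneg_left hb'' hbm
          _ = δ*(r+(-y))*r := by ring
      have hpoly := negPolyA δ d (-y) (r - (-y) - d) hδ hδ1 hd hs0 hu0
      rw [hreq] at hpoly
      nlinarith [hpoly, hSA1', hSA2', hSB', hδ2]
    · -- use negPolyB
      have hSB' : SB ≤ r^2 := le_trans hSB1 (by nlinarith [hb, hb''])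
      have hpoly := negPolyB δ d (-y) (r - (-y) - d) hδ hδ1 hd hs0 hu0 (by rw [hreq]; linarith)
      rw [hreq] at hpoly
      nlinarith [hpoly, hSA1', hSA2', hSB', hδ2]
  · -- POSY case
    have hmx : max y 0 = y := max_eq_left hy.le
    have hmn : min y 0 = 0 := min_eq_right hy.le
    rw [hmx] at ha1'
    rw [hmn] at hb'
    have hpy : 0 ≤ pstar - y := by linarith
    have ha1'' : a1 ≤ pstar - y := le_trans ha1' (le_of_eq (max_eq_right hpy))
    have hSA1' : SA1 ≤ δ*((1-δ)*d)*((1-δ)*d - y) := by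
      have hm : pstar*(pstar - y) ≤ ((1-δ)*d)*((1-δ)*d - y) := by
        nlinarith [mul_nonneg (by linarith [hps] : (0:ℝ) ≤ (1-δ)*d - pstar)
          (by linarith [hps, hyp] : (0:ℝ) ≤ (1-δ)*d + pstar - y)]
      calc SA1 ≤ (δ*pstar)*a1 := hSA1
        _ ≤ (δ*pstar)*(pstar - y) := mul_le_mul_of_nonneg_left ha1'' (by positivity)
        _ = δ*(pstar*(pstar - y)) := by ring
        _ ≤ δ*(((1-δ)*d)*((1-δ)*d - y)) := mul_le_mul_of_nonneg_left hm hδ0.le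
        _ = δ*((1-δ)*d)*((1-δ)*d - y) := by ring
    have hry : 0 ≤ r - y := by
      have h1 : y ≤ (1-δ)*d := le_trans hyp hps
      nlinarith [hr, hd, hδ1, hδ]
    have hb'' : b ≤ r - y := by
      have : (0:ℝ) - (y - r) = r - y := by ring
      rw [this] at hb'
      exact le_trans hb' (le_of_eq (max_eq_right hry))
    have hSB' : SB ≤ δ*(r-y)*(r-y) := by
      calc SB ≤ (δ*(-(y-r)))*b := hSB2
        _ = (δ*(r-y))*b := by ring_nf
        _ ≤ (δ*(r-y))*(r-y) := mul_le_mul_of_nonneg_left hb'' (by positivity)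
    have hpoly := posyPoly δ d y r hδ hδ1 hd hy.le (le_trans hyp hps) hr
    nlinarith [hpoly, hSA1', hSA2', hSB', hδ2]

lemma main_pos (δ : ℝ) (hδ : 1/2 < δ) (hδ1 : δ < 1) (P : Finset ℝ)
    (ρ κ : ℝ → ℝ) (hρ0 : ∀ p ∈ P, 0 ≤ ρ p)
    (hκ : ∀ p ∈ P.filter (fun p => p ≠ 0 ∧ HasSuc P p ∧ ¬Expensive δ P p),
        κ p ∈ P ∧ (0 < p → (κ p ≤ p ∧ suc P p - κ p ≤ ρ (κ p)))
              ∧ (p < 0 → (p ≤ κ p ∧ κ p - suc P p ≤ ρ (κ p))))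
    (y pstar : ℝ) (hy : y ∈ P) (hd : 0 < dmax δ P)
    (hps0 : 0 ≤ pstar) (hps : pstar ≤ (1-δ)*dmax δ P) (hyps : y ≤ pstar)
    (hry : dmax δ P - y ≤ ρ y)
    (hstruct : ∀ p ∈ P, 0 < p → HasSuc P p → ¬Expensive δ P p →
        (p ≤ pstar ∧ suc P p ≤ pstar) ∨ dmax δ P ≤ p) :
    (dmax δ P)^2 +
      ∑ p ∈ P.filter (fun p => p ≠ 0 ∧ HasSuc P p ∧ ¬Expensive δ P p), (suc P p - p)^2
      ≤ (1+δ+(1+5*δ)*(1-δ)^2/δ^2) * ∑ p ∈ P, (ρ p)^2 := by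
  classical
  have hδ0 : (0:ℝ) < δ := by linarith
  set d := dmax δ P with hdd
  set A : ℝ := 1+δ+(1+5*δ)*(1-δ)^2/δ^2 with hA
  set cheapF := P.filter (fun p => p ≠ 0 ∧ HasSuc P p ∧ ¬Expensive δ P p) with hch
  set g : ℝ → ℝ := fun p => (suc P p - p)^2 with hg
  set cheapPos := cheapF.filter (fun p => 0 < p) with hcp
  set cheapNeg := cheapF.filter (fun p => ¬ 0 < p) with hcn
  -- basic facts about members
  have hmemF : ∀ p ∈ cheapF, p ∈ P ∧ p ≠ 0 ∧ HasSuc P p ∧ ¬Expensive δ P p := by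
    intro p hp
    have := Finset.mem_filter.1 hp
    exact ⟨this.1, this.2⟩
  have hmemPos : ∀ p ∈ cheapPos, p ∈ P ∧ 0 < p ∧ HasSuc P p ∧ ¬Expensive δ P p := by
    intro p hp
    have h1 := Finset.mem_filter.1 hp
    have h2 := hmemF p h1.1
    exact ⟨h2.1, h1.2, h2.2.2⟩
  have hmemNeg : ∀ p ∈ cheapNeg, p ∈ P ∧ p < 0 ∧ HasSuc P p ∧ ¬Expensive δ P p := by
    intro p hp
    have h1 := Finset.mem_filter.1 hp
    have h2 := hmemF p h1.1
    exact ⟨h2.1, lt_of_le_of_ne (not_lt.1 h1.2) h2.2.1, h2.2.2⟩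
  have hκPos : ∀ p ∈ cheapPos, κ p ∈ P ∧ κ p ≤ p ∧ suc P p - κ p ≤ ρ (κ p) := by
    intro p hp
    have h1 := Finset.mem_filter.1 hp
    have h2 := hκ p h1.1
    exact ⟨h2.1, h2.2.1 (hmemPos p hp).2.1⟩
  have hκNeg : ∀ p ∈ cheapNeg, κ p ∈ P ∧ p ≤ κ p ∧ κ p - suc P p ≤ ρ (κ p) := by
    intro p hp
    have h1 := Finset.mem_filter.1 hp
    have h2 := hκ p h1.1
    exact ⟨h2.1, h2.2.2 (hmemNeg p hp).2.1⟩
  -- fiberwise decomposition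
  have hsplit : ∑ p ∈ cheapF, g p = ∑ p ∈ cheapPos, g p + ∑ p ∈ cheapNeg, g p :=
    (Finset.sum_filter_add_sum_filter_not cheapF _ g).symm
  have hfibA : ∑ p ∈ cheapPos, g p
      = ∑ x ∈ P, ∑ p ∈ cheapPos.filter (fun p => κ p = x), g p :=
    (Finset.sum_fiberwise_of_maps_to (fun p hp => (hκPos p hp).1) g).symm
  have hfibB : ∑ p ∈ cheapNeg, g p
      = ∑ x ∈ P, ∑ p ∈ cheapNeg.filter (fun p => κ p = x), g p :=
    (Finset.sum_fiberwise_of_maps_to (fun p hp => (hκNeg p hp).1) g).symm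
  have hite : ∑ x ∈ P, (if x = y then d^2 else 0) = d^2 := by
    rw [Finset.sum_ite_eq' P y (fun _ => d^2)]
    simp [hy]
  have hLHS : d^2 + ∑ p ∈ cheapF, g p
      = ∑ x ∈ P, ((∑ p ∈ cheapPos.filter (fun p => κ p = x), g p)
          + (∑ p ∈ cheapNeg.filter (fun p => κ p = x), g p)
          + (if x = y then d^2 else 0)) := by
    rw [Finset.sum_add_distrib, Finset.sum_add_distrib, hite, hsplit, hfibA, hfibB]
    ring
  rw [hLHS, Finset.mul_sum]
  apply Finset.sum_le_sum
  intro x hx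
  set r := ρ x with hr
  have hr0 : 0 ≤ r := hρ0 x hx
  set Af := cheapPos.filter (fun p => κ p = x) with hAf
  set Bf := cheapNeg.filter (fun p => κ p = x) with hBf
  have hAfF : ∀ p ∈ Af, p ∈ P ∧ 0 < p ∧ HasSuc P p ∧ ¬Expensive δ P p := by
    intro p hp; exact hmemPos p (Finset.mem_filter.1 hp).1
  have hAfx : ∀ p ∈ Af, x ≤ p ∧ suc P p ≤ x + r := by
    intro p hp
    have h1 := Finset.mem_filter.1 hp
    have h2 := hκPos p h1.1
    rw [h1.2] at h2
    exact ⟨h2.2.1, by linarith [h2.2.2]⟩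
  have hBfF : ∀ p ∈ Bf, p ∈ P ∧ p < 0 ∧ HasSuc P p ∧ ¬Expensive δ P p := by
    intro p hp; exact hmemNeg p (Finset.mem_filter.1 hp).1
  have hBfx : ∀ p ∈ Bf, p ≤ x ∧ x - r ≤ suc P p := by
    intro p hp
    have h1 := Finset.mem_filter.1 hp
    have h2 := hκNeg p h1.1
    rw [h1.2] at h2
    exact ⟨h2.2.1, by linarith [h2.2.2]⟩
  -- fiber B bounds (generic, used in both cases)
  obtain ⟨bb, hbb0, hbb1, hbb2, hbb3⟩ := fiberB δ hδ0.le P Bf hBfF (x - r) (min x 0)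
    (fun p hp => (hBfx p hp).2)
    (fun p hp => le_min (hBfx p hp).1 (hBfF p hp).2.1.le)
  by_cases hxy : x = y
  · -- ledger case
    subst hxy
    -- split Af
    set Af1 := Af.filter (fun p => p ≤ pstar) with hAf1
    set Af2 := Af.filter (fun p => ¬ p ≤ pstar) with hAf2
    have hsplitA : ∑ p ∈ Af, g p = ∑ p ∈ Af1, g p + ∑ p ∈ Af2, g p :=
      (Finset.sum_filter_add_sum_filter_not Af _ g).symm
    have hAf1F : ∀ p ∈ Af1, suc P p ≤ pstar := by
      intro p hp
      have h1 := Finset.mem_filter.1 hp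
      have h2 := hAfF p h1.1
      rcases hstruct p h2.1 h2.2.1 h2.2.2.1 h2.2.2.2 with h | h
      · exact h.2
      · exfalso
        have : pstar < d := by nlinarith [hps, hd, hδ0]
        linarith [h1.2]
    have hAf2F : ∀ p ∈ Af2, d ≤ p := by
      intro p hp
      have h1 := Finset.mem_filter.1 hp
      have h2 := hAfF p h1.1
      rcases hstruct p h2.1 h2.2.1 h2.2.2.1 h2.2.2.2 with h | h
      · exact absurd h.1 h1.2
      · exact h
    obtain ⟨a1, ha10, ha11, ha12, ha13⟩ := fiberA δ hδ0.le P Af1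
      (fun p hp => hAfF p (Finset.mem_filter.1 hp).1) (max x 0) pstar
      (fun p hp => max_le (hAfx p (Finset.mem_filter.1 hp).1).1 (hAfF p (Finset.mem_filter.1 hp).1).2.1.le)
      hAf1F
    obtain ⟨a2, ha20, ha21, ha22, ha23⟩ := fiberA δ hδ0.le P Af2
      (fun p hp => hAfF p (Finset.mem_filter.1 hp).1) d (x + r)
      (fun p hp => hAf2F p hp)
      (fun p hp => (hAfx p (Finset.mem_filter.1 hp).1).2)
    have hkey := perx_led δ d x r pstar a1 a2 bb
      (∑ p ∈ Af1, g p) (∑ p ∈ Af2, g p) (∑ p ∈ Bf, g p) hδ hδ1 hd hr0 hps0 hps hyps hry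
      ha10 (by
        have : max 0 (pstar - max x 0) = max 0 (pstar - max x 0) := rfl
        exact ha11) ha13
      ha20 ha21 ha22
      hbb0 (by
        have hmm : min x 0 - (x - r) = min x 0 - (x - r) := rfl
        exact hbb1) hbb2 (by
        have : δ*(-(x - r)) = δ*(-(x-r)) := rfl
        calc ∑ p ∈ Bf, g p ≤ (δ*(-(x - r))) * bb := by
              have := hbb3
              simpa using this
          _ = (δ*(-(x-r)))*bb := rfl)
    calc ∑ p ∈ Af, g p + ∑ p ∈ Bf, g p + (if x = x then d^2 else 0)
        = d^2 + (∑ p ∈ Af1, g p + ∑ p ∈ Af2, g p) + ∑ p ∈ Bf, g p := by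
          rw [if_pos rfl, hsplitA]; ring
      _ ≤ A * r^2 := hkey
  · -- generic case
    obtain ⟨aa, haa0, haa1, haa2, haa3⟩ := fiberA δ hδ0.le P Af hAfF (max x 0) (x + r)
      (fun p hp => max_le (hAfx p hp).1 (hAfF p hp).2.1.le)
      (fun p hp => (hAfx p hp).2)
    have hgen := perx_gen δ r x aa bb (∑ p ∈ Af, g p) (∑ p ∈ Bf, g p) hδ hδ1 hr0
      haa0 haa1 haa2 haa3 hbb0 hbb1 hbb2 (by simpa using hbb3)
    have hT : (1+δ) ≤ A := by
      rw [hA]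
      have : 0 ≤ (1+5*δ)*(1-δ)^2/δ^2 := by positivity
      linarith
    calc ∑ p ∈ Af, g p + ∑ p ∈ Bf, g p + (if x = y then d^2 else 0)
        = ∑ p ∈ Af, g p + ∑ p ∈ Bf, g p := by rw [if_neg hxy]; ring
      _ ≤ (1+δ)*r^2 := hgen
      _ ≤ A * r^2 := mul_le_mul_of_nonneg_right hT (sq_nonneg r)

lemma main_neg (δ : ℝ) (hδ : 1/2 < δ) (hδ1 : δ < 1) (P : Finset ℝ)
    (ρ κ : ℝ → ℝ) (hρ0 : ∀ p ∈ P, 0 ≤ ρ p)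
    (hκ : ∀ p ∈ P.filter (fun p => p ≠ 0 ∧ HasSuc P p ∧ ¬Expensive δ P p),
        κ p ∈ P ∧ (0 < p → (κ p ≤ p ∧ suc P p - κ p ≤ ρ (κ p)))
              ∧ (p < 0 → (p ≤ κ p ∧ κ p - suc P p ≤ ρ (κ p))))
    (y pstar : ℝ) (hy : y ∈ P) (hd : 0 < dmax δ P)
    (hps0 : 0 ≤ pstar) (hps : pstar ≤ (1-δ)*dmax δ P) (hyps : -pstar ≤ y)
    (hry : dmax δ P + y ≤ ρ y)
    (hstruct : ∀ p ∈ P, p < 0 → HasSuc P p → ¬Expensive δ P p →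
        (-pstar ≤ p ∧ -pstar ≤ suc P p) ∨ p ≤ -(dmax δ P)) :
    (dmax δ P)^2 +
      ∑ p ∈ P.filter (fun p => p ≠ 0 ∧ HasSuc P p ∧ ¬Expensive δ P p), (suc P p - p)^2
      ≤ (1+δ+(1+5*δ)*(1-δ)^2/δ^2) * ∑ p ∈ P, (ρ p)^2 := by
  classical
  have hδ0 : (0:ℝ) < δ := by linarith
  set d := dmax δ P with hdd
  set A : ℝ := 1+δ+(1+5*δ)*(1-δ)^2/δ^2 with hA
  set cheapF := P.filter (fun p => p ≠ 0 ∧ HasSuc P p ∧ ¬Expensive δ P p) with hch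
  set g : ℝ → ℝ := fun p => (suc P p - p)^2 with hg
  set cheapPos := cheapF.filter (fun p => 0 < p) with hcp
  set cheapNeg := cheapF.filter (fun p => ¬ 0 < p) with hcn
  have hmemF : ∀ p ∈ cheapF, p ∈ P ∧ p ≠ 0 ∧ HasSuc P p ∧ ¬Expensive δ P p := by
    intro p hp
    have := Finset.mem_filter.1 hp
    exact ⟨this.1, this.2⟩
  have hmemPos : ∀ p ∈ cheapPos, p ∈ P ∧ 0 < p ∧ HasSuc P p ∧ ¬Expensive δ P p := by
    intro p hp
    have h1 := Finset.mem_filter.1 hp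
    have h2 := hmemF p h1.1
    exact ⟨h2.1, h1.2, h2.2.2⟩
  have hmemNeg : ∀ p ∈ cheapNeg, p ∈ P ∧ p < 0 ∧ HasSuc P p ∧ ¬Expensive δ P p := by
    intro p hp
    have h1 := Finset.mem_filter.1 hp
    have h2 := hmemF p h1.1
    exact ⟨h2.1, lt_of_le_of_ne (not_lt.1 h1.2) h2.2.1, h2.2.2⟩
  have hκPos : ∀ p ∈ cheapPos, κ p ∈ P ∧ κ p ≤ p ∧ suc P p - κ p ≤ ρ (κ p) := by
    intro p hp
    have h1 := Finset.mem_filter.1 hp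
    have h2 := hκ p h1.1
    exact ⟨h2.1, h2.2.1 (hmemPos p hp).2.1⟩
  have hκNeg : ∀ p ∈ cheapNeg, κ p ∈ P ∧ p ≤ κ p ∧ κ p - suc P p ≤ ρ (κ p) := by
    intro p hp
    have h1 := Finset.mem_filter.1 hp
    have h2 := hκ p h1.1
    exact ⟨h2.1, h2.2.2 (hmemNeg p hp).2.1⟩
  have hsplit : ∑ p ∈ cheapF, g p = ∑ p ∈ cheapPos, g p + ∑ p ∈ cheapNeg, g p :=
    (Finset.sum_filter_add_sum_filter_not cheapF _ g).symm
  have hfibA : ∑ p ∈ cheapPos, g p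
      = ∑ x ∈ P, ∑ p ∈ cheapPos.filter (fun p => κ p = x), g p :=
    (Finset.sum_fiberwise_of_maps_to (fun p hp => (hκPos p hp).1) g).symm
  have hfibB : ∑ p ∈ cheapNeg, g p
      = ∑ x ∈ P, ∑ p ∈ cheapNeg.filter (fun p => κ p = x), g p :=
    (Finset.sum_fiberwise_of_maps_to (fun p hp => (hκNeg p hp).1) g).symm
  have hite : ∑ x ∈ P, (if x = y then d^2 else 0) = d^2 := by
    rw [Finset.sum_ite_eq' P y (fun _ => d^2)]
    simp [hy]
  have hLHS : d^2 + ∑ p ∈ cheapF, g p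
      = ∑ x ∈ P, ((∑ p ∈ cheapPos.filter (fun p => κ p = x), g p)
          + (∑ p ∈ cheapNeg.filter (fun p => κ p = x), g p)
          + (if x = y then d^2 else 0)) := by
    rw [Finset.sum_add_distrib, Finset.sum_add_distrib, hite, hsplit, hfibA, hfibB]
    ring
  rw [hLHS, Finset.mul_sum]
  apply Finset.sum_le_sum
  intro x hx
  set r := ρ x with hr
  have hr0 : 0 ≤ r := hρ0 x hx
  set Af := cheapPos.filter (fun p => κ p = x) with hAf
  set Bf := cheapNeg.filter (fun p => κ p = x) with hBf
  have hAfF : ∀ p ∈ Af, p ∈ P ∧ 0 < p ∧ HasSuc P p ∧ ¬Expensive δ P p := by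
    intro p hp; exact hmemPos p (Finset.mem_filter.1 hp).1
  have hAfx : ∀ p ∈ Af, x ≤ p ∧ suc P p ≤ x + r := by
    intro p hp
    have h1 := Finset.mem_filter.1 hp
    have h2 := hκPos p h1.1
    rw [h1.2] at h2
    exact ⟨h2.2.1, by linarith [h2.2.2]⟩
  have hBfF : ∀ p ∈ Bf, p ∈ P ∧ p < 0 ∧ HasSuc P p ∧ ¬Expensive δ P p := by
    intro p hp; exact hmemNeg p (Finset.mem_filter.1 hp).1
  have hBfx : ∀ p ∈ Bf, p ≤ x ∧ x - r ≤ suc P p := by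
    intro p hp
    have h1 := Finset.mem_filter.1 hp
    have h2 := hκNeg p h1.1
    rw [h1.2] at h2
    exact ⟨h2.2.1, by linarith [h2.2.2]⟩
  -- fiber A bounds (generic, used in both cases)
  obtain ⟨aa, haa0, haa1, haa2, haa3⟩ := fiberA δ hδ0.le P Af hAfF (max x 0) (x + r)
    (fun p hp => max_le (hAfx p hp).1 (hAfF p hp).2.1.le)
    (fun p hp => (hAfx p hp).2)
  by_cases hxy : x = y
  · -- ledger case on the negative side
    subst hxy
    set Bf1 := Bf.filter (fun p => -pstar ≤ p) with hBf1
    set Bf2 := Bf.filter (fun p => ¬ -pstar ≤ p) with hBf2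
    have hsplitB : ∑ p ∈ Bf, g p = ∑ p ∈ Bf1, g p + ∑ p ∈ Bf2, g p :=
      (Finset.sum_filter_add_sum_filter_not Bf _ g).symm
    have hBf1F : ∀ p ∈ Bf1, -pstar ≤ suc P p := by
      intro p hp
      have h1 := Finset.mem_filter.1 hp
      have h2 := hBfF p h1.1
      rcases hstruct p h2.1 h2.2.1 h2.2.2.1 h2.2.2.2 with h | h
      · exact h.2
      · exfalso
        have : pstar < d := by nlinarith [hps, hd, hδ0]
        linarith [h1.2]
    have hBf2F : ∀ p ∈ Bf2, p ≤ -d := by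
      intro p hp
      have h1 := Finset.mem_filter.1 hp
      have h2 := hBfF p h1.1
      rcases hstruct p h2.1 h2.2.1 h2.2.2.1 h2.2.2.2 with h | h
      · exact absurd h.1 h1.2
      · exact h
    obtain ⟨b1, hb10, hb11, hb12, hb13⟩ := fiberB δ hδ0.le P Bf1
      (fun p hp => hBfF p (Finset.mem_filter.1 hp).1) (-pstar) (min x 0)
      hBf1F
      (fun p hp => le_min (hBfx p (Finset.mem_filter.1 hp).1).1 (hBfF p (Finset.mem_filter.1 hp).1).2.1.le)
    obtain ⟨b2, hb20, hb21, hb22, hb23⟩ := fiberB δ hδ0.le P Bf2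
      (fun p hp => hBfF p (Finset.mem_filter.1 hp).1) (x - r) (-d)
      (fun p hp => (hBfx p (Finset.mem_filter.1 hp).1).2)
      (fun p hp => hBf2F p hp)
    -- convert bounds into the shape of perx_led with y := -x
    have hmm1 : max 0 (min x 0 - (-pstar)) = max 0 (pstar - max (-x) 0) := by
      rcases le_total x 0 with h | h
      · rw [min_eq_left h, max_eq_left (by linarith : (0:ℝ) ≤ -x)]
        congr 1; ring
      · rw [min_eq_right h, max_eq_right (by linarith : -x ≤ (0:ℝ))]
        congr 1; ring
    have hmm2 : max 0 ((-d) - (x - r)) = max 0 ((-x) + r - d) := by congr 1; ring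
    have hmm3 : max 0 (x + r - max x 0) = max 0 (min (-x) 0 - ((-x) - r)) := by
      rcases le_total x 0 with h | h
      · rw [max_eq_right h, min_eq_right (by linarith : (0:ℝ) ≤ -x)]
        congr 1; ring
      · rw [max_eq_left h, min_eq_left (by linarith : -x ≤ (0:ℝ))]
        congr 1; ring
    have hkey := perx_led δ d (-x) r pstar b1 b2 aa
      (∑ p ∈ Bf1, g p) (∑ p ∈ Bf2, g p) (∑ p ∈ Af, g p) hδ hδ1 hd hr0 hps0 hps
      (by linarith : -x ≤ pstar) (by linarith : d - (-x) ≤ r)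
      hb10 (by rw [← hmm1]; exact hb11)
      (by calc ∑ p ∈ Bf1, g p ≤ (δ*(-(-pstar)))*b1 := hb13
            _ = (δ*pstar)*b1 := by ring_nf)
      hb20 (by rw [← hmm2]; exact hb21) hb22
      haa0 (by rw [← hmm3]; exact haa1) haa2
      (by calc ∑ p ∈ Af, g p ≤ (δ*(x+r))*aa := haa3
            _ = (δ*(-((-x) - r)))*aa := by ring_nf)
    calc ∑ p ∈ Af, g p + ∑ p ∈ Bf, g p + (if x = x then d^2 else 0)
        = d^2 + (∑ p ∈ Bf1, g p + ∑ p ∈ Bf2, g p) + ∑ p ∈ Af, g p := by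
          rw [if_pos rfl, hsplitB]; ring
      _ ≤ A * r^2 := hkey
  · -- generic case
    obtain ⟨bb, hbb0, hbb1, hbb2, hbb3⟩ := fiberB δ hδ0.le P Bf hBfF (x - r) (min x 0)
      (fun p hp => (hBfx p hp).2)
      (fun p hp => le_min (hBfx p hp).1 (hBfF p hp).2.1.le)
    have hgen := perx_gen δ r x aa bb (∑ p ∈ Af, g p) (∑ p ∈ Bf, g p) hδ hδ1 hr0
      haa0 haa1 haa2 haa3 hbb0 hbb1 hbb2 (by simpa using hbb3)
    have hT : (1+δ) ≤ A := by
      rw [hA]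
      have : 0 ≤ (1+5*δ)*(1-δ)^2/δ^2 := by positivity
      linarith
    calc ∑ p ∈ Af, g p + ∑ p ∈ Bf, g p + (if x = y then d^2 else 0)
        = ∑ p ∈ Af, g p + ∑ p ∈ Bf, g p := by rw [if_neg hxy]; ring
      _ ≤ (1+δ)*r^2 := hgen
      _ ≤ A * r^2 := mul_le_mul_of_nonneg_right hT (sq_nonneg r)

lemma key_bound (δ : ℝ) (hδ : 1/2 < δ) (hδ1 : δ < 1) (P : Finset ℝ)
    (ρ : ℝ → ℝ) (hρ : Feasible P 0 ρ) :
    (dmax δ P)^2 +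
      ∑ p ∈ P.filter (fun p => p ≠ 0 ∧ HasSuc P p ∧ ¬Expensive δ P p), (suc P p - p)^2
      ≤ (1+δ+(1+5*δ)*(1-δ)^2/δ^2) * ∑ p ∈ P, (ρ p)^2 := by
  classical
  have hδ0 : (0:ℝ) < δ := by linarith
  set cheapF := P.filter (fun p => p ≠ 0 ∧ HasSuc P p ∧ ¬Expensive δ P p) with hch
  by_cases hne : (Dcand δ P).Nonempty
  · -- construct the crosser function κ
    have hκex : ∀ p : ℝ, ∃ x : ℝ, p ∈ cheapF →
        (x ∈ P ∧ (0 < p → (x ≤ p ∧ suc P p - x ≤ ρ x))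
              ∧ (p < 0 → (p ≤ x ∧ x - suc P p ≤ ρ x))) := by
      intro p
      by_cases hp : p ∈ cheapF
      · have hmem := Finset.mem_filter.1 hp
        have hpP := hmem.1
        have hp0 := hmem.2.1
        have hhs := hmem.2.2.1
        have hexp := hmem.2.2.2
        rcases lt_trichotomy p 0 with hneg | h0 | hpos
        · have hs := suc_spec_neg hneg (hasSuc_neg_ex hneg hhs)
          obtain ⟨x, hxP, hxgt, hxρ⟩ := crossing_neg hρ hs.1 (by linarith [hs.2.1])
          have hpx : p ≤ x := by
            by_contra h
            push_neg at h
            exact absurd (hs.2.2 x hxP h) (by linarith)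
          exact ⟨x, fun _ => ⟨hxP, fun h => absurd h (by linarith),
            fun _ => ⟨hpx, hxρ⟩⟩⟩
        · exact absurd h0 hp0
        · have hs := suc_spec_pos hpos (hasSuc_pos_ex hpos hhs)
          obtain ⟨x, hxP, hxlt, hxρ⟩ := crossing_pos hρ hs.1 (by linarith [hs.2.1])
          have hpx : x ≤ p := by
            by_contra h
            push_neg at h
            exact absurd (hs.2.2 x hxP h) (by linarith)
          exact ⟨x, fun _ => ⟨hxP, fun _ => ⟨hpx, hxρ⟩,
            fun h => absurd h (by linarith)⟩⟩
      · exact ⟨0, fun h => absurd h hp⟩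
    choose κ hκsp using hκex
    have hκ : ∀ p ∈ cheapF,
        κ p ∈ P ∧ (0 < p → (κ p ≤ p ∧ suc P p - κ p ≤ ρ (κ p)))
              ∧ (p < 0 → (p ≤ κ p ∧ κ p - suc P p ≤ ρ (κ p))) := fun p hp => hκsp p hp
    -- witness analysis
    have hw := dmax_mem hne
    simp only [Dcand, Finset.mem_union, Finset.mem_image, Finset.mem_filter] at hw
    rcases hw with ((⟨pe, ⟨hpeP, hpe0, hexp⟩, hx⟩ | ⟨q, ⟨hq, h0⟩, hx⟩) | ⟨q, ⟨hq, h0⟩, hx⟩)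
    · -- expensive witness
      rcases lt_trichotomy pe 0 with hneg | h0 | hpos
      · -- negative side expensive point
        have hs := suc_spec_neg hneg (hasSuc_neg_ex hneg hexp.1)
        have hsneg : suc P pe < 0 := by linarith [hs.2.1]
        have hdeq : dmax δ P = -(suc P pe) := by
          rw [← hx, abs_of_neg hsneg]
        have hd : 0 < dmax δ P := by rw [hdeq]; linarith
        have hgap : δ * dmax δ P < pe - suc P pe := by
          have := hexp.2
          rw [abs_of_neg hsneg, abs_of_nonpos (by linarith [hs.2.1] : suc P pe - pe ≤ 0)] at this
          rw [hdeq]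
          linarith
        obtain ⟨y, hyP, hygt, hyρ⟩ := crossing_neg hρ hs.1 hsneg
        have hype : pe ≤ y := by
          by_contra h
          push_neg at h
          exact absurd (hs.2.2 y hyP h) (by linarith)
        refine main_neg δ hδ hδ1 P ρ κ hρ.1 hκ y (-pe) hyP hd (by linarith) ?_ (by linarith)
          (by rw [hdeq] at *; linarith) ?_
        · -- -pe ≤ (1-δ)*d
          have : pe - suc P pe = pe + dmax δ P := by rw [hdeq]; ring
          nlinarith [hgap, hd]
        · intro p hpP hpneg hpHS hpExp
          have hppe : p ≠ pe := by
            intro h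
            rw [h] at hpExp
            exact hpExp hexp
          rcases lt_or_gt_of_ne hppe with hlt | hgt
          · -- p < pe : far side, p ≤ suc pe = -d
            right
            have := hs.2.2 p hpP hlt
            rw [hdeq]
            linarith
          · -- pe < p : near side
            left
            have hsp := suc_spec_neg hpneg (hasSuc_neg_ex hpneg hpHS)
            constructor
            · linarith
            · have := hsp.2.2 pe hpeP hgt
              linarith
      · exact absurd h0 hpe0
      · have hs := suc_spec_pos hpos (hasSuc_pos_ex hpos hexp.1)
        have hspos : 0 < suc P pe := by linarith [hs.2.1]
        have hdeq : dmax δ P = suc P pe := by rw [← hx, abs_of_pos hspos]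
        have hd : 0 < dmax δ P := by rw [hdeq]; linarith
        have hgap : δ * dmax δ P < suc P pe - pe := by
          have := hexp.2
          rw [abs_of_pos hspos, abs_of_nonneg (by linarith [hs.2.1] : 0 ≤ suc P pe - pe)] at this
          rw [hdeq]
          linarith
        obtain ⟨y, hyP, hylt, hyρ⟩ := crossing_pos hρ hs.1 hspos
        have hype : y ≤ pe := by
          by_contra h
          push_neg at h
          exact absurd (hs.2.2 y hyP h) (by linarith)
        refine main_pos δ hδ hδ1 P ρ κ hρ.1 hκ y pe hyP hd (by linarith) ?_ hype
          (by rw [hdeq] at *; linarith) ?_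
        · nlinarith [hgap, hd]
        · intro p hpP hppos hpHS hpExp
          have hppe : p ≠ pe := by
            intro h
            rw [h] at hpExp
            exact hpExp hexp
          rcases lt_or_gt_of_ne hppe with hlt | hgt
          · left
            have hsp := suc_spec_pos hppos (hasSuc_pos_ex hppos hpHS)
            exact ⟨hlt.le, hsp.2.2 pe hpeP hlt⟩
          · right
            have := hs.2.2 p hpP hgt
            rw [hdeq]
            linarith
    · -- positive nearest-neighbour witness
      have hspec := sInf_gt_spec P 0 ⟨q, hq, h0⟩
      have hdeq : dmax δ P = sInf {q | q ∈ P ∧ (0:ℝ) < q} := hx.symm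
      have hd : 0 < dmax δ P := by rw [hdeq]; exact hspec.2.1
      obtain ⟨y, hyP, hylt, hyρ⟩ := crossing_pos hρ hspec.1 hspec.2.1
      have hy0 : y ≤ 0 := by
        by_contra h
        push_neg at h
        have := hspec.2.2 y hyP h
        rw [← hdeq] at this
        rw [← hdeq] at hylt
        linarith
      refine main_pos δ hδ hδ1 P ρ κ hρ.1 hκ y 0 hyP hd le_rfl
        (by nlinarith [hd]) hy0 (by rw [hdeq]; linarith [hyρ]) ?_
      intro p hpP hppos _ _
      right
      have := hspec.2.2 p hpP hppos
      rw [hdeq]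
      exact this
    · -- negative nearest-neighbour witness
      have hspec := sSup_lt_spec P 0 ⟨q, hq, h0⟩
      have hdeq : dmax δ P = -sSup {q | q ∈ P ∧ q < (0:ℝ)} := hx.symm
      have hd : 0 < dmax δ P := by rw [hdeq]; linarith [hspec.2.1]
      obtain ⟨y, hyP, hygt, hyρ⟩ := crossing_neg hρ hspec.1 hspec.2.1
      have hy0 : 0 ≤ y := by
        by_contra h
        push_neg at h
        have := hspec.2.2 y hyP h
        have h2 : sSup {q | q ∈ P ∧ q < (0:ℝ)} = -(dmax δ P) := by rw [hdeq]; ring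
        rw [h2] at this hygt
        linarith
      refine main_neg δ hδ hδ1 P ρ κ hρ.1 hκ y 0 hyP hd le_rfl
        (by nlinarith [hd]) (by linarith) ?_ ?_
      · have h2 : sSup {q | q ∈ P ∧ q < (0:ℝ)} = -(dmax δ P) := by rw [hdeq]; ring
        rw [h2] at hyρ
        linarith
      · intro p hpP hpneg _ _
        right
        have := hspec.2.2 p hpP hpneg
        rw [hdeq]
        linarith
  · -- no candidates : P = {0} essentially
    have hd0 : dmax δ P = 0 := dmax_empty hne
    have hchE : cheapF = ∅ := by
      rw [Finset.eq_empty_iff_forall_notMem]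
      intro p hp
      have hmem := Finset.mem_filter.1 hp
      rcases hmem.2.2.1 with ⟨hpos, _⟩ | ⟨hneg, _⟩
      · exact hne ⟨_, mem_dcand_pos (δ := δ) hmem.1 hpos⟩
      · exact hne ⟨_, mem_dcand_neg (δ := δ) hmem.1 hneg⟩
    rw [hd0, hchE]
    simp only [Finset.sum_empty]
    have h1 : (0:ℝ) ≤ (1+δ+(1+5*δ)*(1-δ)^2/δ^2) := by positivity
    have h2 : (0:ℝ) ≤ ∑ p ∈ P, (ρ p)^2 := Finset.sum_nonneg (fun p _ => sq_nonneg _)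
    nlinarith [mul_nonneg h1 h2]

lemma rpow_two_eq (z : ℝ) : z ^ (2:ℝ) = z^(2:ℕ) := by
  rw [show (2:ℝ) = ((2:ℕ):ℝ) by norm_num, Real.rpow_natCast]

lemma cost_rsb (δ : ℝ) (P : Finset ℝ) (hP : (0:ℝ) ∈ P) :
    cost 2 P (rsb δ P) = (dmax δ P)^2 +
      ∑ p ∈ P.filter (fun p => p ≠ 0 ∧ HasSuc P p ∧ ¬Expensive δ P p), (suc P p - p)^2 := by
  classical
  have hconv : cost 2 P (rsb δ P) = ∑ p ∈ P, (rsb δ P p)^(2:ℕ) := by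
    unfold cost
    exact Finset.sum_congr rfl (fun p _ => rpow_two_eq _)
  rw [hconv]
  rw [← Finset.sum_erase_add P _ hP]
  have h0 : (rsb δ P 0)^(2:ℕ) = (dmax δ P)^2 := by
    simp [rsb]
  rw [h0]
  have hsub : P.filter (fun p => p ≠ 0 ∧ HasSuc P p ∧ ¬Expensive δ P p) ⊆ P.erase 0 := by
    intro p hp
    have := Finset.mem_filter.1 hp
    exact Finset.mem_erase.2 ⟨this.2.1, this.1⟩
  have hsum : ∑ p ∈ P.erase 0, (rsb δ P p)^(2:ℕ)
      = ∑ p ∈ P.filter (fun p => p ≠ 0 ∧ HasSuc P p ∧ ¬Expensive δ P p), (suc P p - p)^2 := by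
    rw [← Finset.sum_subset hsub]
    · apply Finset.sum_congr rfl
      intro p hp
      have hmem := Finset.mem_filter.1 hp
      have h1 : rsb δ P p = |suc P p - p| := by
        rw [rsb]
        rw [if_neg hmem.2.1, if_neg hmem.2.2.2, standardRange, if_pos hmem.2.2.1]
      rw [h1, sq_abs]
    · intro p hpE hpF
      have hp0 : p ≠ 0 := (Finset.mem_erase.1 hpE).1
      have hpP : p ∈ P := (Finset.mem_erase.1 hpE).2
      rw [rsb, if_neg hp0]
      by_cases he : Expensive δ P p
      · simp [he]
      · rw [if_neg he, standardRange]
        by_cases hs : HasSuc P p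
        · exact absurd (Finset.mem_filter.2 ⟨hpP, hp0, hs, he⟩) hpF
        · simp [hs]
  rw [hsum]
  ring

/-- The source-based range assignment is feasible and is a
`c_δ`-approximation for α = 2, where
`c_δ = max(1 + δ + (1+5δ)(1-δ)²/δ², 1/δ² + 1/2)`. -/
theorem rsb_approximation (δ : ℝ) (hδ : 1 / 2 < δ) (hδ1 : δ < 1)
    (P : Finset ℝ) (hP : (0:ℝ) ∈ P) :
    Feasible P 0 (rsb δ P) ∧
    cost 2 P (rsb δ P) ≤
      max (1 + δ + (1 + 5 * δ) * (1 - δ) ^ 2 / δ ^ 2) (1 / δ ^ 2 + 1 / 2) * opt 2 P 0 := by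
  classical
  have hδ0 : (0:ℝ) < δ := by linarith
  refine ⟨rsb_feasible δ P hP, ?_⟩
  set A : ℝ := 1 + δ + (1 + 5 * δ) * (1 - δ) ^ 2 / δ ^ 2 with hA
  have hA0 : 0 < A := by rw [hA]; positivity
  set S := {c : ℝ | ∃ ρ : ℝ → ℝ, Feasible P 0 ρ ∧ cost 2 P ρ = c} with hS
  have hSne : S.Nonempty := ⟨cost 2 P (rsb δ P), rsb δ P, rsb_feasible δ P hP, rfl⟩
  have hcnn : ∀ c ∈ S, 0 ≤ c := by
    rintro c ⟨ρ, hρ, rfl⟩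
    unfold cost
    apply Finset.sum_nonneg
    intro p _
    rw [rpow_two_eq]
    exact sq_nonneg _
  have hbdd : BddBelow S := ⟨0, fun c hc => hcnn c hc⟩
  have hlow : ∀ c ∈ S, cost 2 P (rsb δ P) ≤ A * c := by
    rintro c ⟨ρ, hρ, rfl⟩
    rw [cost_rsb δ P hP]
    have hkey := key_bound δ hδ hδ1 P ρ hρ
    have hcρ : cost 2 P ρ = ∑ p ∈ P, (ρ p)^2 := by
      unfold cost
      exact Finset.sum_congr rfl (fun p _ => rpow_two_eq _)
    rw [hcρ]
    exact hkey
  have hopt0 : 0 ≤ opt 2 P 0 := le_csInf hSne hcnn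
  have hle : cost 2 P (rsb δ P) ≤ A * opt 2 P 0 := by
    have h1 : cost 2 P (rsb δ P) / A ≤ opt 2 P 0 := by
      apply le_csInf hSne
      intro c hc
      rw [div_le_iff₀ hA0]
      calc cost 2 P (rsb δ P) ≤ A * c := hlow c hc
        _ = c * A := by ring
    calc cost 2 P (rsb δ P) = (cost 2 P (rsb δ P) / A) * A := by field_simp
      _ ≤ opt 2 P 0 * A := mul_le_mul_of_nonneg_right h1 hA0.le
      _ = A * opt 2 P 0 := by ring
  calc cost 2 P (rsb δ P) ≤ A * opt 2 P 0 := hle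
    _ ≤ max A (1 / δ ^ 2 + 1 / 2) * opt 2 P 0 :=
        mul_le_mul_of_nonneg_right (le_max_left _ _) hopt0
end

section
/- Let δ ∈ (1/2, 1), let Δ₁ ≥ 0 and Δ₂ > 0, and let P ⊂ ℝ be a finite set (source at 0). For p ∈ P with p > 0 let suc(p) = min{q ∈ P : q > p} when this set is nonempty. Let C be the set of points p ∈ P with p ∈ [Δ₂, Δ₂+Δ₁] such that suc(p) exists, suc(p) ∈ [Δ₂, Δ₂+Δ₁], and suc(p) − p ≤ δ·suc(p) (i.e., p is a cheap point lying in the interval I = [Δ₂, Δ₂+Δ₁] whose successor also lies in I). Then Σ_{p∈C} (suc(p) − p)² ≤ δ·(Δ₁+Δ₂)·Δ₁. -/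
attribute [local instance] Classical.propDecidable

lemma sum_gaps_le : ∀ (n : ℕ) (S : Finset ℝ) (hS : S.Nonempty), S.card = n →
    ∀ f : ℝ → ℝ, (∀ p ∈ S, p ≤ f p) → (∀ p ∈ S, ∀ q ∈ S, p < q → f p ≤ q) →
    ∑ p ∈ S, (f p - p) ≤ f (S.max' hS) - S.min' hS := by
  intro n
  induction n with
  | zero =>
    intro S hS hc
    rw [Finset.card_eq_zero] at hc
    subst hc; exact absurd hS (by simp)
  | succ n ih =>
    intro S hS hc f h1 h2
    obtain ⟨m, hm⟩ : ∃ m, S.max' hS = m := ⟨_, rfl⟩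
    have hmS : m ∈ S := hm ▸ S.max'_mem hS
    rw [hm]
    by_cases hS' : (S.erase m).Nonempty
    · have hcard : (S.erase m).card = n := by
        rw [Finset.card_erase_of_mem hmS, hc]; rfl
      have hsum : ∑ p ∈ S, (f p - p) = (f m - m) + ∑ p ∈ S.erase m, (f p - p) :=
        (Finset.add_sum_erase S _ hmS).symm
      have hrec := ih (S.erase m) hS' hcard f
        (fun p hp => h1 p (Finset.mem_of_mem_erase hp))
        (fun p hp q hq hpq => h2 p (Finset.mem_of_mem_erase hp) q (Finset.mem_of_mem_erase hq) hpq)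
      have hmax' : (S.erase m).max' hS' ∈ S.erase m := Finset.max'_mem _ _
      have hlt : (S.erase m).max' hS' < m := by
        have hle : (S.erase m).max' hS' ≤ m := hm ▸ S.le_max' _ (Finset.mem_of_mem_erase hmax')
        have hne : (S.erase m).max' hS' ≠ m := Finset.ne_of_mem_erase hmax'
        exact lt_of_le_of_ne hle hne
      have hfle : f ((S.erase m).max' hS') ≤ m :=
        h2 _ (Finset.mem_of_mem_erase hmax') m hmS hlt
      have hminle : S.min' hS ≤ (S.erase m).min' hS' :=
        S.min'_le _ (Finset.mem_of_mem_erase (Finset.min'_mem _ _))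
      have : ∑ p ∈ S.erase m, (f p - p) ≤ m - S.min' hS := by
        calc ∑ p ∈ S.erase m, (f p - p) ≤ f ((S.erase m).max' hS') - (S.erase m).min' hS' := hrec
          _ ≤ m - S.min' hS := by linarith
      rw [hsum]; linarith
    · have : S = {m} := by
        apply Finset.eq_singleton_iff_unique_mem.mpr
        refine ⟨hmS, fun x hx => ?_⟩
        by_contra hne
        exact hS' ⟨x, Finset.mem_erase.mpr ⟨hne, hx⟩⟩
      subst this
      simp

/-- (Lemma `Le_1`.) Let `δ ∈ (1/2,1)`, `Δ₁ ≥ 0`, `Δ₂ > 0`, and let `P ⊂ ℝ`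
be finite with source 0. The cheap points lying in the interval `I = [Δ₂, Δ₂+Δ₁]` whose
successor also lies in `I` contribute squared standard ranges totalling at most
`δ·(Δ₁+Δ₂)·Δ₁`. Here the successor of `p > 0` is `sInf {q ∈ P | p < q}`. -/
theorem cheap_points_in_interval (δ : ℝ) (hδ : 1 / 2 < δ) (hδ1 : δ < 1)
    (Δ₁ Δ₂ : ℝ) (h1 : 0 ≤ Δ₁) (h2 : 0 < Δ₂) (P : Finset ℝ) :
    ∑ p ∈ P.filter (fun p => Δ₂ ≤ p ∧ p ≤ Δ₂ + Δ₁ ∧ (∃ q ∈ P, p < q) ∧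
        Δ₂ ≤ sInf {q | q ∈ P ∧ p < q} ∧ sInf {q | q ∈ P ∧ p < q} ≤ Δ₂ + Δ₁ ∧
        sInf {q | q ∈ P ∧ p < q} - p ≤ δ * sInf {q | q ∈ P ∧ p < q}),
      (sInf {q | q ∈ P ∧ p < q} - p) ^ 2 ≤ δ * (Δ₁ + Δ₂) * Δ₁ := by
  set f : ℝ → ℝ := fun p => sInf {q | q ∈ P ∧ p < q} with hf
  set C := P.filter (fun p => Δ₂ ≤ p ∧ p ≤ Δ₂ + Δ₁ ∧ (∃ q ∈ P, p < q) ∧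
        Δ₂ ≤ f p ∧ f p ≤ Δ₂ + Δ₁ ∧ f p - p ≤ δ * f p) with hC
  -- basic facts about f on C
  have hfin : ∀ p : ℝ, ({q | q ∈ P ∧ p < q} : Set ℝ).Finite := fun p =>
    Set.Finite.subset P.finite_toSet (fun q hq => hq.1)
  have hmem : ∀ p ∈ C, p < f p ∧ f p ∈ P := by
    intro p hp
    obtain ⟨hpP, _, _, ⟨q, hqP, hpq⟩, _⟩ := Finset.mem_filter.mp hp
    have hne : ({r | r ∈ P ∧ p < r} : Set ℝ).Nonempty := ⟨q, hqP, hpq⟩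
    have := hne.csInf_mem (hfin p)
    exact ⟨this.2, this.1⟩
  have hsucle : ∀ p ∈ C, ∀ q ∈ C, p < q → f p ≤ q := by
    intro p hp q hq hpq
    have hqP : q ∈ P := (Finset.mem_filter.mp hq).1
    exact csInf_le (hfin p).bddBelow ⟨hqP, hpq⟩
  rcases C.eq_empty_or_nonempty with he | hne
  · rw [he]; simp
    exact mul_nonneg (mul_nonneg (by linarith) (by linarith)) h1
  · -- each term bound
    have hterm : ∀ p ∈ C, (f p - p) ^ 2 ≤ δ * (Δ₁ + Δ₂) * (f p - p) := by
      intro p hp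
      obtain ⟨_, _, _, _, _, hfle, hcheap⟩ := Finset.mem_filter.mp hp
      have h0 : 0 ≤ f p - p := le_of_lt (by linarith [(hmem p hp).1])
      have : f p - p ≤ δ * (Δ₁ + Δ₂) := by nlinarith
      nlinarith
    have hsum2 : ∑ p ∈ C, (f p - p) ^ 2 ≤ δ * (Δ₁ + Δ₂) * ∑ p ∈ C, (f p - p) := by
      rw [Finset.mul_sum]
      exact Finset.sum_le_sum hterm
    have hgaps := sum_gaps_le C.card C hne rfl f
      (fun p hp => le_of_lt (hmem p hp).1) hsucle
    have hmaxC : C.max' hne ∈ C := C.max'_mem hne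
    have hminC : C.min' hne ∈ C := C.min'_mem hne
    have hfmax : f (C.max' hne) ≤ Δ₂ + Δ₁ :=
      (Finset.mem_filter.mp hmaxC).2.2.2.2.2.1
    have hmin : Δ₂ ≤ C.min' hne := (Finset.mem_filter.mp hminC).2.1
    have hgap : ∑ p ∈ C, (f p - p) ≤ Δ₁ := by linarith
    have hpos : 0 ≤ δ * (Δ₁ + Δ₂) := by nlinarith
    calc ∑ p ∈ C, (f p - p) ^ 2 ≤ δ * (Δ₁ + Δ₂) * ∑ p ∈ C, (f p - p) := hsum2
      _ ≤ δ * (Δ₁ + Δ₂) * Δ₁ := by nlinarith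
end

section
/- For all real numbers t₁, t₂, t₃ with 0 ≤ t₁ ≤ t₂ ≤ t₃ ≤ 1, one has 1 + (1−t₂)² ≤ (3+√5)·( t₁² + (t₂−t₁)² + (t₃−t₂)² + (1−t₃)² ). Moreover, equality holds for t₂ = (3−√5)/2, t₁ = t₂/2, t₃ = (1+t₂)/2. (This is the worst-case block analysis showing that the 1-stable insertion algorithm achieves approximation ratio exactly 3+√5 on the one-sided problem for α = 2: on a block with endpoints 0 and 1 and middle point t₂, the algorithm pays 1 + (1−t₂)² while the optimal chain pays t₁² + (t₂−t₁)² + (t₃−t₂)² + (1−t₃)².) -/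
/-- Worst-case block analysis of the 1-stable insertion algorithm for α = 2:
for all `0 ≤ t₁ ≤ t₂ ≤ t₃ ≤ 1`,
`1 + (1-t₂)² ≤ (3+√5)·(t₁² + (t₂-t₁)² + (t₃-t₂)² + (1-t₃)²)`, with equality for
`t₂ = (3-√5)/2`, `t₁ = t₂/2`, `t₃ = (1+t₂)/2`. -/
theorem block_ratio_bound :
    (∀ t₁ t₂ t₃ : ℝ, 0 ≤ t₁ → t₁ ≤ t₂ → t₂ ≤ t₃ → t₃ ≤ 1 →
      1 + (1 - t₂) ^ 2 ≤
        (3 + Real.sqrt 5) * (t₁ ^ 2 + (t₂ - t₁) ^ 2 + (t₃ - t₂) ^ 2 + (1 - t₃) ^ 2)) ∧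
    (1 + (1 - (3 - Real.sqrt 5) / 2) ^ 2 =
      (3 + Real.sqrt 5) *
        ((((3 - Real.sqrt 5) / 2) / 2) ^ 2 +
          ((3 - Real.sqrt 5) / 2 - ((3 - Real.sqrt 5) / 2) / 2) ^ 2 +
          ((1 + (3 - Real.sqrt 5) / 2) / 2 - (3 - Real.sqrt 5) / 2) ^ 2 +
          (1 - (1 + (3 - Real.sqrt 5) / 2) / 2) ^ 2)) := by
  have h5 : Real.sqrt 5 ^ 2 = 5 := Real.sq_sqrt (by norm_num)
  have h5pos : (2:ℝ) ≤ Real.sqrt 5 := by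
    nlinarith [Real.sqrt_nonneg 5]
  constructor
  · intro t₁ t₂ t₃ h0 h1 h2 h3
    nlinarith [sq_nonneg (2*t₁ - t₂), sq_nonneg (2*t₃ - 1 - t₂),
      sq_nonneg (2*t₂ - (3 - Real.sqrt 5)),
      mul_nonneg (sub_nonneg.2 h5pos) (sq_nonneg (2*t₁ - t₂)),
      mul_nonneg (sub_nonneg.2 h5pos) (sq_nonneg (2*t₃ - 1 - t₂)),
      mul_nonneg (sub_nonneg.2 h5pos) (sq_nonneg (2*t₂ - (3 - Real.sqrt 5)))]
  · nlinarith [h5]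
end

section
/- Let x = (3−√5)/2 and x₂ = (1+x)/2. Consider the point sets P₀ = {0, 1}, P₁ = {0, x, 1}, and P₂ = {0, x, x₂, 1} in ℝ, each with source 0. Let ρ₀, ρ₁, ρ₂ be feasible range assignments for P₀, P₁, P₂ respectively (each extended by range 0 outside its set), such that ρ₁ differs from ρ₀ at at most one point of ℝ and ρ₂ differs from ρ₁ at at most one point of ℝ. Then cost_2(ρ₁) ≥ ((3+√5)/2)·( x² + (1−x)² ) or cost_2(ρ₂) ≥ ((3+√5)/2)·( x² + (1−x)²/2 ). (Since x² + (1−x)² = opt_2(P₁) and x² + (1−x)²/2 = opt_2(P₂), this shows any 1-stable update algorithm for the dynamic broadcast range-assignment problem in ℝ¹ has approximation ratio at least (3+√5)/2 ≈ 2.61 for α = 2.) -/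
open Finset

attribute [local instance] Classical.propDecidable

lemma exists_step {X : Type*} [MetricSpace X] {P : Finset X} {s p : X} {ρ : X → ℝ}
    (h : Feasible P s ρ) (hp : p ∈ P) (hps : p ≠ s) :
    ∃ q ∈ P, q ≠ p ∧ dist q p ≤ ρ q := by
  obtain ⟨m, f, hf0, hfm, hmem, hstep⟩ := h.2 p hp
  have hex : ∃ i, f i = p := ⟨m, hfm⟩
  have hk : f (Nat.find hex) = p := Nat.find_spec hex
  have hkm : Nat.find hex ≤ m := Nat.find_min' hex hfm
  have hk0 : Nat.find hex ≠ 0 := by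
    intro h0
    exact hps (by rw [← hk, h0, hf0])
  obtain ⟨j, hj⟩ := Nat.exists_eq_succ_of_ne_zero hk0
  refine ⟨f j, hmem j (by omega), ?_, ?_⟩
  · intro hq
    exact Nat.find_min hex (by omega) hq
  · have := hstep j (by omega)
    rw [show j + 1 = Nat.find hex from hj.symm, hk] at this
    exact this

lemma not_mem_diff {S : Set ℝ} (hfin : S.Finite) (hcard : S.ncard ≤ 1)
    {a b : ℝ} (ha : a ∈ S) (hab : b ≠ a) : b ∉ S := by
  intro hb
  have : 1 < S.ncard := (Set.one_lt_ncard hfin).2 ⟨a, ha, b, hb, hab.symm⟩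
  omega

lemma cost_ge_pair {P : Finset ℝ} {ρ : ℝ → ℝ} (hnn : ∀ p ∈ P, 0 ≤ ρ p)
    {a b : ℝ} (ha : a ∈ P) (hb : b ∈ P) (hab : a ≠ b) :
    ρ a ^ 2 + ρ b ^ 2 ≤ cost 2 P ρ := by
  classical
  have hsub : ({a, b} : Finset ℝ) ⊆ P := by
    intro y hy
    rcases Finset.mem_insert.1 hy with rfl | hy
    · exact ha
    · exact (Finset.mem_singleton.1 hy) ▸ hb
  have h := Finset.sum_le_sum_of_subset_of_nonneg hsub
    (fun i hi _ => Real.rpow_nonneg (hnn i hi) 2)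
  calc ρ a ^ 2 + ρ b ^ 2 = ∑ p ∈ ({a, b} : Finset ℝ), ρ p ^ (2 : ℝ) := by
        rw [Finset.sum_pair hab, Real.rpow_two, Real.rpow_two]
    _ ≤ ∑ p ∈ P, ρ p ^ (2 : ℝ) := h
    _ = cost 2 P ρ := rfl

lemma cost_ge_single {P : Finset ℝ} {ρ : ℝ → ℝ} (hnn : ∀ p ∈ P, 0 ≤ ρ p)
    {a : ℝ} (ha : a ∈ P) : ρ a ^ 2 ≤ cost 2 P ρ := by
  classical
  have hsub : ({a} : Finset ℝ) ⊆ P := Finset.singleton_subset_iff.2 ha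
  have h := Finset.sum_le_sum_of_subset_of_nonneg hsub
    (fun i hi _ => Real.rpow_nonneg (hnn i hi) 2)
  calc ρ a ^ 2 = ∑ p ∈ ({a} : Finset ℝ), ρ p ^ (2 : ℝ) := by
        rw [Finset.sum_singleton, Real.rpow_two]
    _ ≤ ∑ p ∈ P, ρ p ^ (2 : ℝ) := h
    _ = cost 2 P ρ := rfl

/-- Lower bound for 1-stable algorithms in ℝ¹ for α = 2: with
`x = (3-√5)/2` and `x₂ = (1+x)/2`, for the insertion sequence producing
`P₀ = {0,1}`, `P₁ = {0,x,1}`, `P₂ = {0,x,x₂,1}`, any chain of feasible assignments in which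
consecutive assignments (extended by 0 outside their point sets) differ in at most one point
satisfies `cost₂(ρ₁) ≥ ((3+√5)/2)·opt₂(P₁)` or `cost₂(ρ₂) ≥ ((3+√5)/2)·opt₂(P₂)`. -/
theorem one_stable_lower_bound (ρ₀ ρ₁ ρ₂ : ℝ → ℝ)
    (h₀ : Feasible ({0, 1} : Finset ℝ) 0 ρ₀)
    (h₁ : Feasible ({0, (3 - Real.sqrt 5) / 2, 1} : Finset ℝ) 0 ρ₁)
    (h₂ : Feasible ({0, (3 - Real.sqrt 5) / 2, (1 + (3 - Real.sqrt 5) / 2) / 2, 1} :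
        Finset ℝ) 0 ρ₂)
    (hd₁ : {p : ℝ |
        (if p ∈ ({0, (3 - Real.sqrt 5) / 2, 1} : Finset ℝ) then ρ₁ p else 0) ≠
        (if p ∈ ({0, 1} : Finset ℝ) then ρ₀ p else 0)}.ncard ≤ 1)
    (hd₂ : {p : ℝ |
        (if p ∈ ({0, (3 - Real.sqrt 5) / 2, (1 + (3 - Real.sqrt 5) / 2) / 2, 1} : Finset ℝ)
          then ρ₂ p else 0) ≠
        (if p ∈ ({0, (3 - Real.sqrt 5) / 2, 1} : Finset ℝ) then ρ₁ p else 0)}.ncard ≤ 1) :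
    ((3 + Real.sqrt 5) / 2) *
        (((3 - Real.sqrt 5) / 2) ^ 2 + (1 - (3 - Real.sqrt 5) / 2) ^ 2) ≤
      cost 2 ({0, (3 - Real.sqrt 5) / 2, 1} : Finset ℝ) ρ₁ ∨
    ((3 + Real.sqrt 5) / 2) *
        (((3 - Real.sqrt 5) / 2) ^ 2 + (1 - (3 - Real.sqrt 5) / 2) ^ 2 / 2) ≤
      cost 2 ({0, (3 - Real.sqrt 5) / 2, (1 + (3 - Real.sqrt 5) / 2) / 2, 1} : Finset ℝ) ρ₂ := by
  have h5 : Real.sqrt 5 ^ 2 = 5 := Real.sq_sqrt (by norm_num)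
  have hs2 : 2 < Real.sqrt 5 := by nlinarith [Real.sqrt_nonneg 5]
  have hs3 : Real.sqrt 5 < 3 := by nlinarith [Real.sqrt_nonneg 5]
  set x : ℝ := (3 - Real.sqrt 5) / 2 with hxdef
  set y : ℝ := (1 + x) / 2 with hydef
  have hx0 : 0 < x := by rw [hxdef]; linarith
  have hx1 : x < 1 / 2 := by rw [hxdef]; linarith
  have hy1 : 1 / 2 < y := by rw [hydef]; linarith
  have hy2 : y < 1 := by rw [hydef]; linarith
  set P₀ : Finset ℝ := {0, 1} with hP₀
  set P₁ : Finset ℝ := {0, x, 1} with hP₁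
  set P₂ : Finset ℝ := {0, x, y, 1} with hP₂
  have hm00 : (0 : ℝ) ∈ P₀ := by simp [hP₀]
  have hm10 : (0 : ℝ) ∈ P₁ := by simp [hP₁]
  have hm1x : x ∈ P₁ := by simp [hP₁]
  have hm11 : (1 : ℝ) ∈ P₁ := by simp [hP₁]
  have hm20 : (0 : ℝ) ∈ P₂ := by simp [hP₂]
  have hm21 : (1 : ℝ) ∈ P₂ := by simp [hP₂]
  have hxP₀ : x ∉ P₀ := by
    simp only [hP₀, Finset.mem_insert, Finset.mem_singleton]
    push_neg
    constructor <;> intro h <;> linarith [h ▸ hx0, h ▸ hx1]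
  have hyP₁ : y ∉ P₁ := by
    simp only [hP₁, Finset.mem_insert, Finset.mem_singleton]
    push_neg
    refine ⟨by intro h; linarith [h ▸ hy1], by intro h; linarith, by intro h; linarith⟩
  -- diff sets are finite
  have hfin₁ : {p : ℝ | (if p ∈ P₁ then ρ₁ p else 0) ≠ (if p ∈ P₀ then ρ₀ p else 0)}.Finite := by
    apply Set.Finite.subset ((P₁.finite_toSet).union (P₀.finite_toSet))
    intro p hp
    by_contra hnp
    simp only [Set.mem_union, Finset.mem_coe, not_or] at hnp
    simp only [Set.mem_setOf_eq, if_neg hnp.1, if_neg hnp.2, ne_eq, not_true] at hp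
  have hfin₂ : {p : ℝ | (if p ∈ P₂ then ρ₂ p else 0) ≠ (if p ∈ P₁ then ρ₁ p else 0)}.Finite := by
    apply Set.Finite.subset ((P₂.finite_toSet).union (P₁.finite_toSet))
    intro p hp
    by_contra hnp
    simp only [Set.mem_union, Finset.mem_coe, not_or] at hnp
    simp only [Set.mem_setOf_eq, if_neg hnp.1, if_neg hnp.2, ne_eq, not_true] at hp
  -- ρ₀ 0 ≥ 1
  have hρ₀0 : 1 ≤ ρ₀ 0 := by
    obtain ⟨q, hqP, hq1, hqd⟩ := exists_step h₀ (by simp [hP₀]) one_ne_zero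
    have : q = 0 := by
      rcases Finset.mem_insert.1 hqP with h | h
      · exact h
      · exact absurd (Finset.mem_singleton.1 h) hq1
    subst this
    rwa [Real.dist_eq, show |(0:ℝ) - 1| = 1 by norm_num] at hqd
  -- key: left disjunct whenever ρ₁ 0 ≥ 1 and ρ₁ x ≥ 1 - x
  have left_case : 1 ≤ ρ₁ 0 → 1 - x ≤ ρ₁ x →
      ((3 + Real.sqrt 5) / 2) * (x ^ 2 + (1 - x) ^ 2) ≤ cost 2 P₁ ρ₁ := by
    intro h1 h2
    have hc := cost_ge_pair h₁.1 hm10 hm1x (by intro h; exact absurd h.symm (ne_of_gt hx0))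
    have hkey : ((3 + Real.sqrt 5) / 2) * (x ^ 2 + (1 - x) ^ 2) = 1 + x := by
      rw [hxdef]; linear_combination ((Real.sqrt 5 - 1) / 4) * h5
    have hsq : (1 - x) ^ 2 = x := by
      rw [hxdef]; linear_combination (1 / 4 : ℝ) * h5
    rw [hkey]
    nlinarith [hc, h1, h2, hx1, sq_nonneg (ρ₁ 0 - 1), sq_nonneg (ρ₁ x - (1 - x)), hsq]
  -- key: right disjunct whenever ρ₂ 0 ≥ 1
  have right_case : 1 ≤ ρ₂ 0 →
      ((3 + Real.sqrt 5) / 2) * (x ^ 2 + (1 - x) ^ 2 / 2) ≤ cost 2 P₂ ρ₂ := by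
    intro h1
    have hc := cost_ge_single h₂.1 hm20
    have hkey : ((3 + Real.sqrt 5) / 2) * (x ^ 2 + (1 - x) ^ 2 / 2) = x + 1 / 2 := by
      rw [hxdef]; linear_combination ((3 * Real.sqrt 5 - 5) / 16) * h5
    rw [hkey]
    nlinarith [hc, h1, hx1, sq_nonneg (ρ₂ 0 - 1)]
  obtain ⟨q, hqP, hq1, hqd⟩ := exists_step h₁ hm11 one_ne_zero
  simp only [hP₁, Finset.mem_insert, Finset.mem_singleton] at hqP
  rcases hqP with rfl | rfl | rfl
  · -- q = 0 : ρ₁ 0 ≥ 1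
    have hρ₁0 : 1 ≤ ρ₁ 0 := by
      rwa [Real.dist_eq, show |(0:ℝ) - 1| = 1 by norm_num] at hqd
    obtain ⟨r, hrP, hr1, hrd⟩ := exists_step h₂ hm21 one_ne_zero
    simp only [hP₂, Finset.mem_insert, Finset.mem_singleton] at hrP
    rcases hrP with rfl | rfl | rfl | rfl
    · -- r = 0 : ρ₂ 0 ≥ 1
      right
      apply right_case
      rwa [Real.dist_eq, show |(0:ℝ) - 1| = 1 by norm_num] at hrd
    · -- r = x
      have hr2x : 1 - x ≤ ρ₂ x := by
        rwa [Real.dist_eq, abs_of_nonpos (by linarith : x - 1 ≤ 0), neg_sub] at hrd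
      by_cases hceq : ρ₂ x = ρ₁ x
      · left
        exact left_case hρ₁0 (hceq ▸ hr2x)
      · right
        apply right_case
        have hxm2 : x ∈ P₂ := by simp [hP₂]
        have hxD : x ∈ {p : ℝ | (if p ∈ P₂ then ρ₂ p else 0) ≠ (if p ∈ P₁ then ρ₁ p else 0)} := by
          simp only [Set.mem_setOf_eq, if_pos hxm2, if_pos hm1x]
          exact hceq
        have h0D := not_mem_diff hfin₂ hd₂ hxD (Ne.symm (ne_of_gt hx0))
        simp only [Set.mem_setOf_eq, if_pos hm20, if_pos hm10, ne_eq, not_not] at h0D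
        linarith [h0D ▸ hρ₁0]
    · -- r = y
      right
      apply right_case
      have hr2y : 1 - y ≤ ρ₂ y := by
        rwa [Real.dist_eq, abs_of_nonpos (by linarith : y - 1 ≤ 0), neg_sub] at hrd
      have hym2 : y ∈ P₂ := by simp [hP₂]
      have hyD : y ∈ {p : ℝ | (if p ∈ P₂ then ρ₂ p else 0) ≠ (if p ∈ P₁ then ρ₁ p else 0)} := by
        simp only [Set.mem_setOf_eq, if_pos hym2, if_neg hyP₁]
        intro h
        linarith [h ▸ hr2y]
      have h0D := not_mem_diff hfin₂ hd₂ hyD (by intro h; exact absurd h.symm (by linarith : y ≠ 0) )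
      simp only [Set.mem_setOf_eq, if_pos hm20, if_pos hm10, ne_eq, not_not] at h0D
      linarith [h0D ▸ hρ₁0]
    · exact absurd rfl hr1
  · -- q = x : ρ₁ x ≥ 1 - x, forces change at x, so ρ₁ 0 = ρ₀ 0 ≥ 1
    left
    have hr1x : 1 - x ≤ ρ₁ x := by
      rwa [Real.dist_eq, abs_of_nonpos (by linarith : x - 1 ≤ 0), neg_sub] at hqd
    have hxD : x ∈ {p : ℝ | (if p ∈ P₁ then ρ₁ p else 0) ≠ (if p ∈ P₀ then ρ₀ p else 0)} := by
      simp only [Set.mem_setOf_eq, if_pos hm1x, if_neg hxP₀]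
      intro h
      linarith [h ▸ hr1x]
    have h0D := not_mem_diff hfin₁ hd₁ hxD (Ne.symm (ne_of_gt hx0))
    simp only [Set.mem_setOf_eq, if_pos hm10, if_pos hm00, ne_eq, not_not] at h0D
    exact left_case (by linarith [h0D ▸ hρ₀0]) hr1x
  · exact absurd rfl hq1
end

section
/- Let α > 1 and let P ⊂ ℝ be finite with 0 ∈ P (source 0). Define the standard-range assignment σ by: for p ∈ P with p > 0, σ(p) = min{q ∈ P : q > p} − p if a larger point exists and σ(p) = 0 otherwise; for p ∈ P with p < 0, σ(p) = p − max{q ∈ P : q < p} if a smaller point exists and σ(p) = 0 otherwise; and σ(0) is the maximum of the distance from 0 to its nearest point on the right (0 if none) and the distance from 0 to its nearest point on the left (0 if none). Then σ is a feasible broadcast range assignment for P with source 0, and cost_α(σ) ≤ 2·opt_α(P). (This is the 2-stable 2-approximation standard-range algorithm.) -/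
/-!
Feasibility: walking outward from the source, every point is reached from its neighbour on the
side of `0`, whose standard range is exactly the gap between them.

Cost: let `ρ` be feasible. A path from `0` to the successor `p⁺` of a point `p ≥ 0` must jump
over the gap `(p, p⁺)` from some `r ≤ p`, so `[p, p⁺] ⊆ [r, r + ρ r]`. The gaps charged to one `r`
are disjoint, so their lengths add up to at most `ρ r`, and superadditivity of `t ↦ t ^ α` for
`α ≥ 1` bounds the sum of their `α`-th powers by `ρ r ^ α`. Hence the right gaps cost at most
`cost α P ρ`, and so do the left gaps, by the reflection `p ↦ -p`. The standard assignment pays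
each gap once, except at the source, which pays the larger of its two gaps.
-/

open Finset

attribute [local instance] Classical.propDecidable

/-- The standard-range assignment: every point gets the distance to its successor (0 if none),
and the source gets the larger of its distances to its nearest neighbours on either side. -/
noncomputable def standardAssignment (P : Finset ℝ) : ℝ → ℝ := fun p =>
  if 0 < p then (if ∃ q ∈ P, p < q then sInf {q | q ∈ P ∧ p < q} - p else 0)
  else if p < 0 then (if ∃ q ∈ P, q < p then p - sSup {q | q ∈ P ∧ q < p} else 0)
  else
    max (if ∃ q ∈ P, (0:ℝ) < q then sInf {q | q ∈ P ∧ (0:ℝ) < q} else 0)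
      (if ∃ q ∈ P, q < (0:ℝ) then -sSup {q | q ∈ P ∧ q < (0:ℝ)} else 0)

open scoped Pointwise

/-- `p + rightGap P p` is the successor of `p` in `P`; the gap is `0` when `p` has none. -/
noncomputable def rightGap (P : Finset ℝ) (p : ℝ) : ℝ :=
  if ∃ q ∈ P, p < q then sInf {q | q ∈ P ∧ p < q} - p else 0

section rightGap

variable {P : Finset ℝ} {p q : ℝ}

lemma rightGap_of_not_exists (h : ¬∃ q ∈ P, p < q) : rightGap P p = 0 := if_neg h

lemma add_rightGap_eq_csInf (h : ∃ q ∈ P, p < q) :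
    p + rightGap P p = sInf ↑(P.filter (p < ·)) := by
  rw [rightGap, if_pos h, coe_filter]
  ring

lemma add_rightGap_mem (h : ∃ q ∈ P, p < q) : p + rightGap P p ∈ P.filter (p < ·) := by
  rw [add_rightGap_eq_csInf h]
  exact Nonempty.csInf_mem (filter_nonempty_iff.2 h)

lemma add_rightGap_le (hq : q ∈ P) (hpq : p < q) : p + rightGap P p ≤ q := by
  rw [add_rightGap_eq_csInf ⟨q, hq, hpq⟩]
  exact csInf_le (P.filter (p < ·)).bddBelow (mem_filter.2 ⟨hq, hpq⟩)

lemma rightGap_nonneg (P : Finset ℝ) (p : ℝ) : 0 ≤ rightGap P p := by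
  by_cases h : ∃ q ∈ P, p < q
  · linarith [(mem_filter.1 (add_rightGap_mem h)).2]
  · exact (rightGap_of_not_exists h).ge

lemma exists_add_rightGap_eq (hq : q ∈ P) (hp : p ∈ P) (hqp : q < p) :
    ∃ r ∈ P, q ≤ r ∧ r < p ∧ r + rightGap P r = p := by
  have hne : (P.filter (· < p)).Nonempty := ⟨q, mem_filter.2 ⟨hq, hqp⟩⟩
  set r := (P.filter (· < p)).max' hne
  obtain ⟨hrP, hrp⟩ := mem_filter.1 (max'_mem _ hne)
  refine ⟨r, hrP, le_max' _ q (mem_filter.2 ⟨hq, hqp⟩), hrp,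
    le_antisymm (add_rightGap_le hp hrp) ?_⟩
  obtain ⟨hsP, hrs⟩ := mem_filter.1 (add_rightGap_mem ⟨p, hp, hrp⟩)
  by_contra! hsp
  exact (le_max' _ _ (mem_filter.2 ⟨hsP, hsp⟩)).not_gt hrs

lemma leftGap_eq_rightGap_neg (P : Finset ℝ) (p : ℝ) :
    (if ∃ q ∈ P, q < p then p - sSup {q | q ∈ P ∧ q < p} else 0) = rightGap (-P) (-p) := by
  have hex : (∃ q ∈ -P, -p < q) ↔ ∃ q ∈ P, q < p :=
    ⟨fun ⟨q, hq, h⟩ => ⟨-q, mem_neg'.1 hq, neg_lt.1 h⟩,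
      fun ⟨q, hq, h⟩ => ⟨-q, neg_mem_neg hq, neg_lt_neg h⟩⟩
  have hset : {q | q ∈ -P ∧ -p < q} = -{q | q ∈ P ∧ q < p} := by
    ext q
    simp [mem_neg', neg_lt]
  simp only [rightGap, hex, hset, Real.sInf_neg]
  split_ifs <;> ring

end rightGap

section standardAssignment

variable {P : Finset ℝ} {p : ℝ}

lemma standardAssignment_of_pos (hp : 0 < p) : standardAssignment P p = rightGap P p :=
  if_pos hp

lemma standardAssignment_of_neg (hp : p < 0) : standardAssignment P p = rightGap (-P) (-p) := by
  rw [standardAssignment, if_neg hp.not_gt, if_pos hp, leftGap_eq_rightGap_neg]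

lemma standardAssignment_zero (P : Finset ℝ) :
    standardAssignment P 0 = max (rightGap P 0) (rightGap (-P) 0) := by
  have h := leftGap_eq_rightGap_neg P 0
  simp only [zero_sub, neg_zero] at h
  rw [standardAssignment, if_neg (lt_irrefl 0), if_neg (lt_irrefl 0), h]
  congr 1
  simp only [rightGap, sub_zero]

lemma standardAssignment_neg (P : Finset ℝ) (p : ℝ) :
    standardAssignment (-P) (-p) = standardAssignment P p := by
  rcases lt_trichotomy p 0 with hp | rfl | hp
  · rw [standardAssignment_of_neg hp, standardAssignment_of_pos (neg_pos.2 hp)]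
  · rw [neg_zero, standardAssignment_zero, standardAssignment_zero, neg_neg, max_comm]
  · rw [standardAssignment_of_pos hp, standardAssignment_of_neg (neg_lt_zero.2 hp), neg_neg,
      neg_neg]

lemma rightGap_le_standardAssignment (hp : 0 ≤ p) : rightGap P p ≤ standardAssignment P p := by
  rcases hp.lt_or_eq with hp | rfl
  · exact (standardAssignment_of_pos hp).ge
  · exact (standardAssignment_zero P).ge.trans' (le_max_left _ _)

lemma standardAssignment_nonneg (P : Finset ℝ) (p : ℝ) : 0 ≤ standardAssignment P p := by
  rcases le_total 0 p with hp | hp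
  · exact (rightGap_nonneg P p).trans (rightGap_le_standardAssignment hp)
  · rw [← standardAssignment_neg]
    exact (rightGap_nonneg _ _).trans (rightGap_le_standardAssignment (neg_nonneg.2 hp))

end standardAssignment

def RangeReachable {X : Type*} [MetricSpace X] (P : Finset X) (s : X) (ρ : X → ℝ) (p : X) :
    Prop :=
  ∃ (m : ℕ) (f : ℕ → X), f 0 = s ∧ f m = p ∧ (∀ i ≤ m, f i ∈ P) ∧
    ∀ i < m, dist (f i) (f (i + 1)) ≤ ρ (f i)

section RangeReachable

variable {X : Type*} [MetricSpace X] {P : Finset X} {s p r : X} {ρ : X → ℝ}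

lemma feasible_iff : Feasible P s ρ ↔ (∀ p ∈ P, 0 ≤ ρ p) ∧ ∀ p ∈ P, RangeReachable P s ρ p :=
  Iff.rfl

lemma RangeReachable.refl (hs : s ∈ P) : RangeReachable P s ρ s :=
  ⟨0, fun _ => s, rfl, rfl, fun _ _ => hs, fun _ h => absurd h (Nat.not_lt_zero _)⟩

lemma RangeReachable.step (h : RangeReachable P s ρ r) (hp : p ∈ P) (hrp : dist r p ≤ ρ r) :
    RangeReachable P s ρ p := by
  obtain ⟨m, f, hf0, hfm, hfP, hf⟩ := h
  refine ⟨m + 1, Function.update f (m + 1) p, ?_, by simp, fun i hi => ?_, fun i hi => ?_⟩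
  · rw [Function.update_of_ne (by omega), hf0]
  · rcases (Nat.le_succ_iff.1 hi) with hi | rfl
    · rw [Function.update_of_ne (by omega)]
      exact hfP i hi
    · simpa using hp
  · rcases (Nat.lt_succ_iff_lt_or_eq.1 hi) with hi | rfl
    · rw [Function.update_of_ne (by omega), Function.update_of_ne (by omega)]
      exact hf i hi
    · simpa [hfm] using hrp

end RangeReachable

section neg

variable {P : Finset ℝ} {s p : ℝ} {ρ : ℝ → ℝ}

lemma RangeReachable.neg (h : RangeReachable P s ρ p) :
    RangeReachable (-P) (-s) (fun x => ρ (-x)) (-p) := by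
  obtain ⟨m, f, hf0, hfm, hfP, hf⟩ := h
  refine ⟨m, fun i => -f i, by simp only [hf0], by simp only [hfm],
    fun i hi => neg_mem_neg (hfP i hi), fun i hi => ?_⟩
  simpa only [dist_neg_neg, neg_neg] using hf i hi

lemma Feasible.neg (h : Feasible P s ρ) : Feasible (-P) (-s) (fun x => ρ (-x)) := by
  rw [feasible_iff] at h ⊢
  refine ⟨fun p hp => h.1 _ (mem_neg'.1 hp), fun p hp => ?_⟩
  simpa only [neg_neg] using (h.2 _ (mem_neg'.1 hp)).neg

lemma cost_neg (α : ℝ) (P : Finset ℝ) (ρ : ℝ → ℝ) :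
    cost α (-P) (fun x => ρ (-x)) = cost α P ρ := by
  simp only [cost, sum_neg_index, neg_neg]

end neg

section feasibility

variable {P : Finset ℝ} {p : ℝ}

lemma rangeReachable_standardAssignment_of_nonneg (hP : 0 ∈ P) (hp : p ∈ P) (h0p : 0 ≤ p) :
    RangeReachable P 0 (standardAssignment P) p := by
  revert h0p
  refine P.finite_toSet.wellFoundedOn.induction (r := (· < ·)) hp
    (P := fun p => 0 ≤ p → RangeReachable P 0 (standardAssignment P) p) fun p hp ih h0p => ?_
  rcases h0p.lt_or_eq with h0p | rfl
  · obtain ⟨r, hrP, h0r, hrp, hrp'⟩ := exists_add_rightGap_eq hP hp h0p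
    refine (ih r hrP hrp h0r).step hp ?_
    rw [Real.dist_eq, abs_sub_comm, abs_of_pos (sub_pos.2 hrp), ← hrp', add_sub_cancel_left]
    exact rightGap_le_standardAssignment h0r
  · exact .refl hP

theorem feasible_standardAssignment (hP : 0 ∈ P) : Feasible P 0 (standardAssignment P) := by
  refine feasible_iff.2 ⟨fun p _ => standardAssignment_nonneg P p, fun p hp => ?_⟩
  rcases le_total 0 p with h0p | hp0
  · exact rangeReachable_standardAssignment_of_nonneg hP hp h0p
  · have hP' : 0 ∈ -P := by simpa using neg_mem_neg hP
    have := (rangeReachable_standardAssignment_of_nonneg hP' (neg_mem_neg hp)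
      (neg_nonneg.2 hp0)).neg
    simpa only [neg_neg, neg_zero, standardAssignment_neg] using this

end feasibility

lemma exists_le_lt_succ_of_le_of_lt {f : ℕ → ℝ} {x : ℝ} {m : ℕ} (h0 : f 0 ≤ x) (hm : x < f m) :
    ∃ j < m, f j ≤ x ∧ x < f (j + 1) := by
  induction m with
  | zero => exact absurd (h0.trans_lt hm) (lt_irrefl _)
  | succ m ih =>
    by_cases hfm : f m ≤ x
    · exact ⟨m, m.lt_succ_self, hfm, hm⟩
    · obtain ⟨j, hj, hfj⟩ := ih (not_le.1 hfm)
      exact ⟨j, hj.trans m.lt_succ_self, hfj⟩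

lemma Real.sum_rpow_le_rpow_sum {ι : Type*} {α : ℝ} (hα : 1 ≤ α) {s : Finset ι} {f : ι → ℝ}
    (hf : ∀ i ∈ s, 0 ≤ f i) : ∑ i ∈ s, f i ^ α ≤ (∑ i ∈ s, f i) ^ α := by
  classical
  induction s using Finset.induction_on with
  | empty =>
    rw [sum_empty, sum_empty]
    exact Real.rpow_nonneg le_rfl α
  | insert a s ha ih =>
    rw [sum_insert ha, sum_insert ha]
    have hs : ∀ i ∈ s, 0 ≤ f i := fun i hi => hf i (mem_insert_of_mem hi)
    calc f a ^ α + ∑ i ∈ s, f i ^ α ≤ f a ^ α + (∑ i ∈ s, f i) ^ α := by gcongr; exact ih hs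
      _ ≤ (f a + ∑ i ∈ s, f i) ^ α :=
        Real.add_rpow_le_rpow_add (hf a (mem_insert_self a s)) (sum_nonneg hs) hα

section lowerBound

variable {P : Finset ℝ} {s p x a b : ℝ} {ρ : ℝ → ℝ}

lemma RangeReachable.exists_le_add_rightGap_le (h : RangeReachable P s ρ x) (hsp : s ≤ p)
    (hpx : p < x) : ∃ r ∈ P, r ≤ p ∧ p + rightGap P p ≤ r + ρ r := by
  obtain ⟨m, f, hf0, hfm, hfP, hf⟩ := h
  obtain ⟨j, hjm, hfj, hfj'⟩ := exists_le_lt_succ_of_le_of_lt (f := f) (hf0 ▸ hsp) (hfm ▸ hpx)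
  refine ⟨f j, hfP j hjm.le, hfj, (add_rightGap_le (hfP (j + 1) hjm) hfj').trans ?_⟩
  have hjump : f (j + 1) - f j ≤ dist (f j) (f (j + 1)) := by
    rw [dist_comm, Real.dist_eq]
    exact le_abs_self _
  linarith [hf j hjm]

lemma Feasible.exists_le_add_rightGap_le (hρ : Feasible P s ρ) (hp : p ∈ P) (hsp : s ≤ p) :
    ∃ r ∈ P, r ≤ p ∧ p + rightGap P p ≤ r + ρ r := by
  by_cases h : ∃ q ∈ P, p < q
  · obtain ⟨hqP, hpq⟩ := mem_filter.1 (add_rightGap_mem h)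
    exact RangeReachable.exists_le_add_rightGap_le (hρ.2 _ hqP) hsp hpq
  · exact ⟨p, hp, le_rfl, by rw [rightGap_of_not_exists h]; linarith [hρ.1 p hp]⟩

/-- The intervals `[p, p + rightGap P p]`, `p ∈ P`, do not overlap. -/
lemma sum_rightGap_le {T : Finset ℝ} (hTP : T ⊆ P) (hab : a ≤ b)
    (hT : ∀ p ∈ T, a ≤ p ∧ p + rightGap P p ≤ b) : ∑ p ∈ T, rightGap P p ≤ b - a := by
  induction T using Finset.induction_on_max generalizing b with
  | empty => simpa using hab
  | insert c T hc ih =>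
    have hcT : c ∉ T := fun h => lt_irrefl c (hc c h)
    obtain ⟨hac, hcb⟩ := hT c (mem_insert_self c T)
    have hcP := hTP (mem_insert_self c T)
    have hT' : ∑ p ∈ T, rightGap P p ≤ c - a :=
      ih ((subset_insert c T).trans hTP) hac fun p hp =>
        ⟨(hT p (mem_insert_of_mem hp)).1, add_rightGap_le hcP (hc p hp)⟩
    rw [sum_insert hcT]
    linarith

theorem Feasible.sum_rightGap_rpow_le_cost {α : ℝ} (hα : 1 ≤ α) (hρ : Feasible P s ρ) :
    ∑ p ∈ P with s ≤ p, rightGap P p ^ α ≤ cost α P ρ := by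
  choose! c hcP hcp hc using fun p (hp : p ∈ P.filter (s ≤ ·)) =>
    hρ.exists_le_add_rightGap_le (mem_filter.1 hp).1 (mem_filter.1 hp).2
  rw [← sum_fiberwise_of_maps_to hcP]
  refine sum_le_sum fun r hr => ?_
  set T := (P.filter (s ≤ ·)).filter (c · = r)
  have hgap : ∑ p ∈ T, rightGap P p ≤ ρ r := by
    have := sum_rightGap_le (P := P) (T := T) (a := r) (b := r + ρ r)
      (fun p hp => (mem_filter.1 (mem_filter.1 hp).1).1) (by linarith [hρ.1 r hr])
      fun p hp => by
        obtain ⟨hpP, hcr⟩ := mem_filter.1 hp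
        exact hcr ▸ ⟨hcp p hpP, hc p hpP⟩
    linarith
  calc ∑ p ∈ T, rightGap P p ^ α ≤ (∑ p ∈ T, rightGap P p) ^ α :=
        Real.sum_rpow_le_rpow_sum hα fun p _ => rightGap_nonneg P p
    _ ≤ ρ r ^ α := by gcongr; exact sum_nonneg fun p _ => rightGap_nonneg P p

end lowerBound

lemma cost_standardAssignment_le (α : ℝ) (P : Finset ℝ) :
    cost α P (standardAssignment P) ≤
      ∑ p ∈ P with 0 ≤ p, rightGap P p ^ α + ∑ p ∈ -P with 0 ≤ p, rightGap (-P) p ^ α := by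
  rw [sum_filter, sum_filter, sum_neg_index, ← sum_add_distrib, cost]
  refine sum_le_sum fun p _ => ?_
  rcases lt_trichotomy p 0 with hp | rfl | hp
  · rw [standardAssignment_of_neg hp, if_neg hp.not_ge, if_pos (neg_nonneg.2 hp.le), zero_add]
  · have hr := Real.rpow_nonneg (rightGap_nonneg P 0) α
    have hl := Real.rpow_nonneg (rightGap_nonneg (-P) 0) α
    rw [standardAssignment_zero, neg_zero, if_pos le_rfl, if_pos le_rfl]
    rcases max_choice (rightGap P 0) (rightGap (-P) 0) with h | h <;> rw [h] <;> linarith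
  · rw [standardAssignment_of_pos hp, if_pos hp.le, if_neg (neg_nonneg.not.2 hp.not_ge),
      add_zero]

theorem cost_standardAssignment_le_two_mul {α : ℝ} (hα : 1 ≤ α) {P : Finset ℝ} {ρ : ℝ → ℝ}
    (hρ : Feasible P 0 ρ) : cost α P (standardAssignment P) ≤ 2 * cost α P ρ := by
  have hright := hρ.sum_rightGap_rpow_le_cost hα
  have hleft := hρ.neg.sum_rightGap_rpow_le_cost hα
  rw [neg_zero, cost_neg] at hleft
  linarith [cost_standardAssignment_le α P]

lemma le_opt {X : Type*} [MetricSpace X] {α c : ℝ} {P : Finset X} {s : X}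
    (hne : ∃ ρ, Feasible P s ρ) (h : ∀ ρ, Feasible P s ρ → c ≤ cost α P ρ) : c ≤ opt α P s := by
  obtain ⟨ρ, hρ⟩ := hne
  exact le_csInf ⟨_, ρ, hρ, rfl⟩ fun _ ⟨ρ, hρ, hc⟩ => hc ▸ h ρ hρ

/-- The standard-range assignment is a feasible broadcast range assignment
and a 2-approximation for every distance-power gradient α > 1. -/
theorem standard_range_two_approx (α : ℝ) (hα : 1 < α)
    (P : Finset ℝ) (hP : (0:ℝ) ∈ P) :
    Feasible P 0 (standardAssignment P) ∧
    cost α P (standardAssignment P) ≤ 2 * opt α P 0 := by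
  have hfeas := feasible_standardAssignment hP
  refine ⟨hfeas, ?_⟩
  have hopt : cost α P (standardAssignment P) / 2 ≤ opt α P 0 :=
    le_opt ⟨_, hfeas⟩ fun ρ hρ => by linarith [cost_standardAssignment_le_two_mul hα.le hρ]
  linarith
end

section
/- Let c = (3−√5)/2 and let P = {0, c/2, c, (1+c)/2, 1} ⊂ ℝ with source 0. Then for α = 2 the optimal broadcast cost is opt_2(P) = (5−2√5)/2; in particular, the assignment ρ with ρ(0) = ρ(c/2) = c/2 and ρ(c) = ρ((1+c)/2) = (1−c)/2 and ρ(1) = 0 is feasible and attains this cost, and every feasible range assignment for P has cost_2 at least (5−2√5)/2. -/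
open Finset

attribute [local instance] Classical.propDecidable

/-- The constant `c = (3-√5)/2`. -/
noncomputable def cval : ℝ := (3 - Real.sqrt 5) / 2

/-- The explicit optimal assignment on `{0, c/2, c, (1+c)/2, 1}`. -/
noncomputable def rho17 : ℝ → ℝ := fun p =>
  if p = 0 ∨ p = cval / 2 then cval / 2
  else if p = cval ∨ p = (1 + cval) / 2 then (1 - cval) / 2
  else 0

lemma sqrt5_sq : (Real.sqrt 5)^2 = 5 := Real.sq_sqrt (by norm_num)
lemma sqrt5_gt : 2 < Real.sqrt 5 := by nlinarith [sqrt5_sq, Real.sqrt_nonneg 5]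
lemma sqrt5_lt : Real.sqrt 5 < 3 := by nlinarith [sqrt5_sq, Real.sqrt_nonneg 5]
lemma cval_pos : 0 < cval := by unfold cval; linarith [sqrt5_lt]
lemma cval_lt : cval < 1/2 := by unfold cval; linarith [sqrt5_gt]

lemma crossing (P : Finset ℝ) (ρ : ℝ → ℝ) (m : ℕ) (f : ℕ → ℝ)
    (hmem : ∀ i ≤ m, f i ∈ P) (hstep : ∀ i < m, dist (f i) (f (i + 1)) ≤ ρ (f i))
    (L R : ℝ) (hgap : ∀ q ∈ P, L < q → R ≤ q)
    (h0 : f 0 ≤ L) (hm : L < f m) :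
    ∃ p ∈ P, p ≤ L ∧ R - p ≤ ρ p := by
  classical
  set i := Nat.findGreatest (fun j => f j ≤ L) m with hi
  have hfi : f i ≤ L := Nat.findGreatest_spec (P := fun j => f j ≤ L) (Nat.zero_le m) h0
  have him : i ≤ m := Nat.findGreatest_le m
  have hilt : i < m := by
    rcases lt_or_eq_of_le him with h | h
    · exact h
    · exfalso; rw [h] at hfi; exact absurd hfi (not_le.2 hm)
  have hnext : ¬ f (i + 1) ≤ L :=
    Nat.findGreatest_is_greatest (P := fun j => f j ≤ L) (Nat.lt_succ_self i) hilt
  have hR : R ≤ f (i + 1) := hgap _ (hmem _ hilt) (not_le.1 hnext)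
  refine ⟨f i, hmem i him, hfi, ?_⟩
  have hd := hstep i hilt
  rw [Real.dist_eq] at hd
  have habs : f (i + 1) - f i ≤ |f i - f (i + 1)| := by
    rw [abs_sub_comm]; exact le_abs_self _
  linarith

lemma sqle {v x : ℝ} (hv : 0 ≤ v) (hvx : v ≤ x) : v^2 ≤ x^2 := by nlinarith

set_option maxHeartbeats 1000000 in
lemma arith24 (s x0 x1 x2 x3 x4 : ℝ) (hs : s^2 = 5) (h2 : 2 < s) (h3 : s < 3)
    (H1 : (3 - s)/4 ≤ x0)
    (H2 : (3 - s)/2 ≤ x0 ∨ (3 - s)/4 ≤ x1)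
    (H3 : (5 - s)/4 ≤ x0 ∨ 1/2 ≤ x1 ∨ (s - 1)/4 ≤ x2)
    (H4 : 1 ≤ x0 ∨ (1 + s)/4 ≤ x1 ∨ (s - 1)/2 ≤ x2 ∨ (s - 1)/4 ≤ x3) :
    (5 - 2*s)/2 ≤ x0^2 + x1^2 + x2^2 + x3^2 + x4^2 := by
  rcases H2 with h|h <;> rcases H3 with h'|h'|h' <;> rcases H4 with h''|h''|h''|h'' <;>
    linarith [hs, sq_nonneg x0, sq_nonneg x1, sq_nonneg x2, sq_nonneg x3, sq_nonneg x4,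
      sqle (show (0:ℝ) ≤ (3-s)/4 by linarith) H1,
      sqle (by linarith : (0:ℝ) ≤ _) h,
      sqle (by linarith : (0:ℝ) ≤ _) h',
      sqle (by linarith : (0:ℝ) ≤ _) h'']

-- evaluation lemmas for rho17
lemma rho_e0 : rho17 0 = cval/2 := if_pos (Or.inl rfl)
lemma rho_e1 : rho17 (cval/2) = cval/2 := if_pos (Or.inr rfl)
lemma rho_e2 : rho17 cval = (1 - cval)/2 := by
  have hc := cval_pos
  rw [rho17]
  rw [if_neg (by push_neg; constructor <;> intro h <;> nlinarith), if_pos (Or.inl rfl)]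

lemma rho_e3 : rho17 ((1 + cval)/2) = (1 - cval)/2 := by
  have hc := cval_pos; have hc' := cval_lt
  rw [rho17]
  rw [if_neg (by push_neg; constructor <;> intro h <;> nlinarith), if_pos (Or.inr rfl)]

lemma rho_e4 : rho17 1 = 0 := by
  have hc := cval_pos; have hc' := cval_lt
  rw [rho17]
  rw [if_neg (by push_neg; constructor <;> intro h <;> nlinarith),
      if_neg (by push_neg; constructor <;> intro h <;> nlinarith)]

lemma rho_nonneg (p : ℝ) : 0 ≤ rho17 p := by
  have hc := cval_pos; have hc' := cval_lt
  rw [rho17]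
  split_ifs <;> linarith

lemma cost_sum (ρ : ℝ → ℝ) :
    cost 2 ({0, cval / 2, cval, (1 + cval) / 2, 1} : Finset ℝ) ρ =
      ρ 0 ^ 2 + ρ (cval/2) ^ 2 + ρ cval ^ 2 + ρ ((1 + cval)/2) ^ 2 + ρ 1 ^ 2 := by
  classical
  have hc := cval_pos; have hc' := cval_lt
  have hpow : ∀ x : ℝ, x ^ (2:ℝ) = x ^ (2:ℕ) := by
    intro x
    rw [show (2:ℝ) = ((2:ℕ):ℝ) by norm_num, Real.rpow_natCast]
  rw [cost]
  rw [Finset.sum_insert (by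
        simp only [Finset.mem_insert, Finset.mem_singleton]
        push_neg
        refine ⟨by intro h; nlinarith, by intro h; nlinarith, by intro h; nlinarith,
          by intro h; nlinarith⟩),
      Finset.sum_insert (by
        simp only [Finset.mem_insert, Finset.mem_singleton]
        push_neg
        refine ⟨by intro h; nlinarith, by intro h; nlinarith, by intro h; nlinarith⟩),
      Finset.sum_insert (by
        simp only [Finset.mem_insert, Finset.mem_singleton]
        push_neg
        refine ⟨by intro h; nlinarith, by intro h; nlinarith⟩),
      Finset.sum_insert (by
        simp only [Finset.mem_singleton]
        intro h; nlinarith),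
      Finset.sum_singleton]
  rw [hpow, hpow, hpow, hpow, hpow]
  ring

noncomputable def gpath : ℕ → ℝ := fun i =>
  if i = 0 then 0 else if i = 1 then cval/2 else if i = 2 then cval
  else if i = 3 then (1 + cval)/2 else 1

lemma gpath0 : gpath 0 = 0 := rfl
lemma gpath1 : gpath 1 = cval/2 := rfl
lemma gpath2 : gpath 2 = cval := rfl
lemma gpath3 : gpath 3 = (1 + cval)/2 := rfl
lemma gpath4 : gpath 4 = 1 := rfl

lemma gpath_mem (i : ℕ) : gpath i ∈ ({0, cval / 2, cval, (1 + cval) / 2, 1} : Finset ℝ) := by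
  rcases i with _|_|_|_|i <;>
    simp [gpath, Finset.mem_insert, Finset.mem_singleton]

lemma gpath_step (i : ℕ) (hi : i < 4) : dist (gpath i) (gpath (i+1)) ≤ rho17 (gpath i) := by
  have hc := cval_pos; have hc' := cval_lt
  interval_cases i
  · rw [gpath0, gpath1, rho_e0, Real.dist_eq, abs_le]; constructor <;> linarith
  · rw [gpath1, gpath2, rho_e1, Real.dist_eq, abs_le]; constructor <;> linarith
  · rw [gpath2, gpath3, rho_e2, Real.dist_eq, abs_le]; constructor <;> linarith
  · rw [gpath3, gpath4, rho_e3, Real.dist_eq, abs_le]; constructor <;> linarith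

lemma feasible17 : Feasible ({0, cval / 2, cval, (1 + cval) / 2, 1} : Finset ℝ) 0 rho17 := by
  constructor
  · exact fun p _ => rho_nonneg p
  · intro p hp
    simp only [Finset.mem_insert, Finset.mem_singleton] at hp
    rcases hp with rfl|rfl|rfl|rfl|rfl
    · exact ⟨0, gpath, gpath0, gpath0, fun i _ => gpath_mem i,
        fun i hi => absurd hi (Nat.not_lt_zero i)⟩
    · exact ⟨1, gpath, gpath0, gpath1, fun i _ => gpath_mem i,
        fun i hi => by interval_cases i; exact gpath_step 0 (by norm_num)⟩
    · exact ⟨2, gpath, gpath0, gpath2, fun i _ => gpath_mem i,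
        fun i hi => gpath_step i (by omega)⟩
    · exact ⟨3, gpath, gpath0, gpath3, fun i _ => gpath_mem i,
        fun i hi => gpath_step i (by omega)⟩
    · exact ⟨4, gpath, gpath0, gpath4, fun i _ => gpath_mem i,
        fun i hi => gpath_step i (by omega)⟩

lemma cost17 : cost 2 ({0, cval / 2, cval, (1 + cval) / 2, 1} : Finset ℝ) rho17 =
    (5 - 2 * Real.sqrt 5) / 2 := by
  rw [cost_sum, rho_e0, rho_e1, rho_e2, rho_e3, rho_e4]
  have e1 : cval = (3 - Real.sqrt 5)/2 := rfl
  rw [e1]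
  nlinarith [sqrt5_sq]

lemma lower_bound (ρ' : ℝ → ℝ)
    (h : Feasible ({0, cval / 2, cval, (1 + cval) / 2, 1} : Finset ℝ) 0 ρ') :
    (5 - 2 * Real.sqrt 5) / 2 ≤
      cost 2 ({0, cval / 2, cval, (1 + cval) / 2, 1} : Finset ℝ) ρ' := by
  classical
  have hc := cval_pos; have hc' := cval_lt
  have e1 : cval = (3 - Real.sqrt 5)/2 := rfl
  obtain ⟨hnn, hpath⟩ := h
  obtain ⟨m, f, hf0, hfm, hmem, hstep⟩ := hpath 1 (by
    simp only [Finset.mem_insert, Finset.mem_singleton]; tauto)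
  set P : Finset ℝ := {0, cval / 2, cval, (1 + cval) / 2, 1} with hP
  -- gap 1
  obtain ⟨p, hpP, hpL, hpρ⟩ := crossing P ρ' m f hmem hstep 0 (cval/2)
    (by intro q hq hlt
        simp only [hP, Finset.mem_insert, Finset.mem_singleton] at hq
        rcases hq with rfl|rfl|rfl|rfl|rfl <;> linarith)
    (le_of_eq hf0) (by rw [hfm]; norm_num)
  have H1 : cval/2 ≤ ρ' 0 := by
    simp only [hP, Finset.mem_insert, Finset.mem_singleton] at hpP
    rcases hpP with rfl|rfl|rfl|rfl|rfl <;> linarith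
  -- gap 2
  obtain ⟨p, hpP, hpL, hpρ⟩ := crossing P ρ' m f hmem hstep (cval/2) cval
    (by intro q hq hlt
        simp only [hP, Finset.mem_insert, Finset.mem_singleton] at hq
        rcases hq with rfl|rfl|rfl|rfl|rfl <;> linarith)
    (by rw [hf0]; linarith) (by rw [hfm]; linarith)
  have H2 : cval ≤ ρ' 0 ∨ cval/2 ≤ ρ' (cval/2) := by
    simp only [hP, Finset.mem_insert, Finset.mem_singleton] at hpP
    rcases hpP with rfl|rfl|rfl|rfl|rfl
    · left; linarith
    · right; linarith
    · linarith
    · linarith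
    · linarith
  -- gap 3
  obtain ⟨p, hpP, hpL, hpρ⟩ := crossing P ρ' m f hmem hstep cval ((1+cval)/2)
    (by intro q hq hlt
        simp only [hP, Finset.mem_insert, Finset.mem_singleton] at hq
        rcases hq with rfl|rfl|rfl|rfl|rfl <;> linarith)
    (by rw [hf0]; linarith) (by rw [hfm]; linarith)
  have H3 : (1+cval)/2 ≤ ρ' 0 ∨ 1/2 ≤ ρ' (cval/2) ∨ (1-cval)/2 ≤ ρ' cval := by
    simp only [hP, Finset.mem_insert, Finset.mem_singleton] at hpP
    rcases hpP with rfl|rfl|rfl|rfl|rfl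
    · left; linarith
    · right; left; linarith
    · right; right; linarith
    · linarith
    · linarith
  -- gap 4
  obtain ⟨p, hpP, hpL, hpρ⟩ := crossing P ρ' m f hmem hstep ((1+cval)/2) 1
    (by intro q hq hlt
        simp only [hP, Finset.mem_insert, Finset.mem_singleton] at hq
        rcases hq with rfl|rfl|rfl|rfl|rfl <;> linarith)
    (by rw [hf0]; linarith) (by rw [hfm]; linarith)
  have H4 : 1 ≤ ρ' 0 ∨ 1 - cval/2 ≤ ρ' (cval/2) ∨ 1 - cval ≤ ρ' cval ∨
      (1-cval)/2 ≤ ρ' ((1+cval)/2) := by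
    simp only [hP, Finset.mem_insert, Finset.mem_singleton] at hpP
    rcases hpP with rfl|rfl|rfl|rfl|rfl
    · left; linarith
    · right; left; linarith
    · right; right; left; linarith
    · right; right; right; linarith
    · linarith
  rw [hP, cost_sum]
  refine arith24 (Real.sqrt 5) (ρ' 0) (ρ' (cval/2)) (ρ' cval) (ρ' ((1+cval)/2)) (ρ' 1)
    sqrt5_sq sqrt5_gt sqrt5_lt ?_ ?_ ?_ ?_
  · linarith [e1]
  · rcases H2 with h|h
    · exact Or.inl (by linarith [e1])
    · exact Or.inr (by linarith [e1])
  · rcases H3 with h|h|h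
    · exact Or.inl (by linarith [e1])
    · exact Or.inr (Or.inl (by linarith))
    · exact Or.inr (Or.inr (by linarith [e1]))
  · rcases H4 with h|h|h|h
    · exact Or.inl (by linarith)
    · exact Or.inr (Or.inl (by linarith [e1]))
    · exact Or.inr (Or.inr (Or.inl (by linarith [e1])))
    · exact Or.inr (Or.inr (Or.inr (by linarith [e1])))


/-- With `c = (3-√5)/2` and `P = {0, c/2, c, (1+c)/2, 1}` (source 0),
the optimal broadcast cost for α = 2 is `(5-2√5)/2`: the assignment `ρ(0)=ρ(c/2)=c/2`,
`ρ(c)=ρ((1+c)/2)=(1-c)/2`, `ρ(1)=0` is feasible and attains it, and every feasible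
assignment costs at least `(5-2√5)/2`. -/
theorem opt_of_five_point_instance :
    Feasible ({0, cval / 2, cval, (1 + cval) / 2, 1} : Finset ℝ) 0 rho17 ∧
    cost 2 ({0, cval / 2, cval, (1 + cval) / 2, 1} : Finset ℝ) rho17 =
      (5 - 2 * Real.sqrt 5) / 2 ∧
    (∀ ρ' : ℝ → ℝ, Feasible ({0, cval / 2, cval, (1 + cval) / 2, 1} : Finset ℝ) 0 ρ' →
      (5 - 2 * Real.sqrt 5) / 2 ≤
        cost 2 ({0, cval / 2, cval, (1 + cval) / 2, 1} : Finset ℝ) ρ') ∧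
    opt 2 ({0, cval / 2, cval, (1 + cval) / 2, 1} : Finset ℝ) 0 =
      (5 - 2 * Real.sqrt 5) / 2 := by
  refine ⟨feasible17, cost17, lower_bound, ?_⟩
  have hmem : (5 - 2 * Real.sqrt 5) / 2 ∈
      {c : ℝ | ∃ ρ : ℝ → ℝ,
        Feasible ({0, cval / 2, cval, (1 + cval) / 2, 1} : Finset ℝ) 0 ρ ∧
        cost 2 ({0, cval / 2, cval, (1 + cval) / 2, 1} : Finset ℝ) ρ = c} :=
    ⟨rho17, feasible17, cost17⟩
  have hlb : ∀ x ∈ {c : ℝ | ∃ ρ : ℝ → ℝ,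
        Feasible ({0, cval / 2, cval, (1 + cval) / 2, 1} : Finset ℝ) 0 ρ ∧
        cost 2 ({0, cval / 2, cval, (1 + cval) / 2, 1} : Finset ℝ) ρ = c},
      (5 - 2 * Real.sqrt 5) / 2 ≤ x := by
    rintro x ⟨ρ, hf, rfl⟩
    exact lower_bound ρ hf
  rw [opt]
  exact le_antisymm (csInf_le ⟨_, hlb⟩ hmem) (le_csInf ⟨_, hmem⟩ hlb)
end
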